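/- arXiv:1605.02242 — 4 statements merged into one kernel-verified Lean document; each statement's English description precedes it below -/
import Mathlib

section
/- Every non-negative integer square matrix M has a positive power M^t which, up to conjugation by a permutation matrix, is a lower triangular block matrix in which every diagonal block is either a primitive matrix or power bounded (i.e. the entries of all its powers are uniformly bounded). -/
open Filter Matrix

noncomputable section

def l1 {ι : Type*} [Fintype ι] (v : ι → ℝ) : ℝ := ∑ i, |v i|

def IsPrimitive {ι : Type*} [Fintype ι] [DecidableEq ι] (M : Matrix ι ι ℝ) : Prop :=
  ∃ k : ℕ, 0 < k ∧ ∀ i j, 0 < (M ^ k) i j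

def IsPowerBounded {ι : Type*} [Fintype ι] [DecidableEq ι] (M : Matrix ι ι ℝ) : Prop :=
  ∃ C : ℝ, ∀ t : ℕ, 1 ≤ t → ∀ i j, (M ^ t) i j ≤ C

def diagBlock {ι : Type*} {m : ℕ} (M : Matrix ι ι ℝ) (b : ι → Fin m) (p : Fin m) :
    Matrix {i // b i = p} {i // b i = p} ℝ :=
  Matrix.of fun i j => M i.1 j.1

/-- `M` is a lower triangular block matrix (for the block structure given by `b`, where
blocks are ordered by the order of `Fin m`; an arbitrary function `b` accounts for
conjugation by a permutation) in which every diagonal block is primitive or power bounded. -/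
def IsPBFrobenius {ι : Type*} [Fintype ι] [DecidableEq ι] (M : Matrix ι ι ℝ) : Prop :=
  ∃ (m : ℕ) (b : ι → Fin m),
    (∀ i j, b i < b j → M i j = 0) ∧
    ∀ p : Fin m, _root_.IsPrimitive (diagBlock M b p) ∨ IsPowerBounded (diagBlock M b p)

/-- Primitive Frobenius form: lower triangular block matrix, every diagonal block
primitive (1×1 blocks with entry 1 are primitive; 1×1 blocks with entry 0 are covered
by the second disjunct). -/
def IsPrimFrobenius {ι : Type*} [Fintype ι] [DecidableEq ι] (M : Matrix ι ι ℝ) : Prop :=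
  ∃ (m : ℕ) (b : ι → Fin m),
    (∀ i j, b i < b j → M i j = 0) ∧
    ∀ p : Fin m, _root_.IsPrimitive (diagBlock M b p) ∨
      (∀ i j, b i = p → b j = p → i = j ∧ M i j = 0)

/-- No coordinate vector is mapped by a positive power of `M` to itself or to `0`. -/
def MatExpanding {ι : Type*} [Fintype ι] [DecidableEq ι] (M : Matrix ι ι ℝ) : Prop :=
  ¬ ∃ (i : ι) (k : ℕ), 0 < k ∧
      ((M ^ k).mulVec (Pi.single i 1) = Pi.single i 1 ∨ (M ^ k).mulVec (Pi.single i 1) = 0)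

/-!
The positivity pattern of a product of nonnegative matrices depends only on the patterns of the
factors, so `k ↦ pattern (M ^ k)` turns addition into composition of relations and takes finitely
many values. Hence some power `N = M ^ T` has an idempotent pattern: the relation `0 < N i j` is
transitive. Ordering the classes of mutual reachability by a linear extension of reachability puts
`N` in block lower triangular form. A class containing a positive diagonal entry gives an entrywise
positive, hence primitive, block; any other class is a single index with zero diagonal entry.
-/

open Function Relation

theorem Finite.exists_pos_map_add_self_eq {α : Type*} [Finite α] (f : ℕ → α)
    (hf : ∀ a b c, f a = f b → f (a + c) = f (b + c)) : ∃ T, 0 < T ∧ f (T + T) = f T := by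
  obtain ⟨a, b, hne, heq⟩ := Finite.exists_ne_map_eq_of_infinite f
  wlog hlt : a < b generalizing a b
  · exact this b a hne.symm heq.symm (by omega)
  obtain ⟨p, hp, rfl⟩ : ∃ p, 0 < p ∧ b = a + p := ⟨b - a, by omega, by omega⟩
  have hper : Periodic (fun c => f (a + c)) p := fun c => by
    dsimp only
    rw [← add_assoc, add_right_comm]
    exact hf _ _ c heq.symm
  obtain ⟨c, hc⟩ : ∃ c, (a + 1) * p = a + c :=
    ⟨(a + 1) * p - a, by have := Nat.le_mul_of_pos_right (a + 1) hp; omega⟩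
  refine ⟨(a + 1) * p, by positivity, ?_⟩
  have := hper.nat_mul (a + 1) c
  simp only [← add_assoc] at this
  rwa [← hc] at this

namespace Matrix

variable {l m n R : Type*} [Fintype m] [Semiring R] [LinearOrder R] [IsStrictOrderedRing R]

theorem mul_apply_pos_iff {A : Matrix l m R} {B : Matrix m n R} (hA : ∀ i j, 0 ≤ A i j)
    (hB : ∀ i j, 0 ≤ B i j) (i : l) (j : n) :
    0 < (A * B) i j ↔ ∃ k, 0 < A i k ∧ 0 < B k j := by
  rw [mul_apply, Finset.sum_pos_iff_of_nonneg fun k _ => mul_nonneg (hA i k) (hB k j)]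
  refine exists_congr fun k => ⟨fun ⟨_, h⟩ => ?_, fun h => ⟨Finset.mem_univ k, mul_pos h.1 h.2⟩⟩
  exact ⟨(hA i k).lt_of_ne' (left_ne_zero_of_mul h.ne'),
    (hB k j).lt_of_ne' (right_ne_zero_of_mul h.ne')⟩

variable [DecidableEq m]

theorem exists_isTrans_pow_apply_pos {A : Matrix m m R} (hA : ∀ i j, 0 ≤ A i j) :
    ∃ T, 0 < T ∧ IsTrans m fun i j => 0 < (A ^ T) i j := by
  have hpow := pow_apply_nonneg hA
  have hpattern : ∀ a c i j, 0 < (A ^ (a + c)) i j ↔ ∃ k, 0 < (A ^ a) i k ∧ 0 < (A ^ c) k j :=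
    fun a c => by rw [pow_add]; exact mul_apply_pos_iff (hpow a) (hpow c)
  obtain ⟨T, hT, hidem⟩ := Finite.exists_pos_map_add_self_eq (fun k i j => 0 < (A ^ k) i j)
    fun a b c h => by
      simp only [funext_iff, eq_iff_iff] at h
      ext i j
      simp only [hpattern, h]
  simp only [funext_iff, eq_iff_iff] at hidem
  exact ⟨T, hT, ⟨fun i k j hik hkj => (hidem i j).1 ((hpattern T T i j).2 ⟨k, hik, hkj⟩)⟩⟩

end Matrix

theorem exists_fin_monotone_injective (α : Type*) [PartialOrder α] [Finite α] :
    ∃ (m : ℕ) (f : α → Fin m), Monotone f ∧ Injective f := by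
  let : Fintype (LinearExtension α) := Fintype.ofFinite α
  let e := (Fintype.orderIsoFinOfCardEq (LinearExtension α) rfl).symm
  exact ⟨_, fun a => e (toLinearExtension a), e.monotone.comp toLinearExtension.monotone,
    e.injective.comp fun _ _ h => h⟩

theorem exists_fin_rank_of_isPreorder {ι : Type*} [Finite ι] (r : ι → ι → Prop)
    [IsPreorder ι r] :
    ∃ (m : ℕ) (b : ι → Fin m), (∀ i j, r i j → b j ≤ b i) ∧ ∀ i j, b i = b j → r i j := by
  obtain ⟨m, f, hmono, hinj⟩ := exists_fin_monotone_injective (Set ι)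
  refine ⟨m, fun i => f {k | r i k}, fun i j hij => hmono fun k hjk => _root_.trans hij hjk,
    fun i j h => ?_⟩
  exact (Set.ext_iff.1 (hinj h) j).2 (refl j)

section PBFrobenius

variable {ι : Type*} [Fintype ι] [DecidableEq ι]

theorem isPrimitive_of_forall_pos {A : Matrix ι ι ℝ} (hA : ∀ i j, 0 < A i j) :
    _root_.IsPrimitive A :=
  ⟨1, one_pos, by simpa using hA⟩

theorem isPowerBounded_zero : IsPowerBounded (0 : Matrix ι ι ℝ) :=
  ⟨0, fun t ht i j => by simp [zero_pow (Nat.one_le_iff_ne_zero.1 ht)]⟩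

theorem isPBFrobenius_of_isTrans {N : Matrix ι ι ℝ} (hN : ∀ i j, 0 ≤ N i j)
    (hN_trans : IsTrans ι fun i j => 0 < N i j) : IsPBFrobenius N := by
  set S : ι → ι → Prop := fun i j => 0 < N i j
  have hS : ∀ {x y}, TransGen S x y → S x y := fun h => (@transGen_eq_self _ _ hN_trans) ▸ h
  obtain ⟨m, b, hb_anti, hb_fiber⟩ := exists_fin_rank_of_isPreorder (ReflTransGen S)
  refine ⟨m, b, fun i j hlt => ?_, fun p => ?_⟩
  · by_contra hne
    exact (hb_anti i j (.single ((hN i j).lt_of_ne' hne))).not_gt hlt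
  by_cases hloop : ∃ v, b v = p ∧ S v v
  · obtain ⟨v, rfl, hv⟩ := hloop
    refine .inl (isPrimitive_of_forall_pos fun x y => hS ?_)
    exact (TransGen.tail' (hb_fiber x v x.2) hv).trans_left (hb_fiber v y y.2.symm)
  · push Not at hloop
    suffices diagBlock N b p = 0 from .inr (this ▸ isPowerBounded_zero)
    ext ⟨x, hx⟩ ⟨y, hy⟩
    obtain rfl | hyx := reflTransGen_iff_eq_or_transGen.1 (hb_fiber y x (hy.trans hx.symm))
    · exact le_antisymm (not_lt.1 (hloop x hx)) (hN x x)
    · exact absurd (hS (hyx.trans_left (hb_fiber x y (hx.trans hy.symm)))) (hloop y hy)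

end PBFrobenius

/-- Every non-negative integer square matrix has a positive power which (up to
conjugation by a permutation, absorbed in the block-assignment function) is in
PB-Frobenius form. -/
theorem statement0 {n : ℕ} (M : Matrix (Fin n) (Fin n) ℝ)
    (hZ : ∀ i j, ∃ z : ℕ, M i j = (z : ℝ)) :
    ∃ t : ℕ, 1 ≤ t ∧ IsPBFrobenius (M ^ t) := by
  have hM : ∀ i j, 0 ≤ M i j := fun i j => by
    obtain ⟨z, hz⟩ := hZ i j
    exact hz ▸ z.cast_nonneg
  obtain ⟨T, hT, hT_trans⟩ := exists_isTrans_pow_apply_pos hM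
  exact ⟨T, hT, isPBFrobenius_of_isTrans (pow_apply_nonneg hM T) hT_trans⟩
end
end

section
/- A non-negative integer square matrix M is expanding (no coordinate vector is mapped by a positive power of M to itself or to the zero vector) if and only if for every non-negative column vector v ≠ 0 the norms ‖M^t v‖ tend to infinity as t → ∞. -/
/-!
Over ℕ, a matrix without zero columns does not decrease the coordinate sum of a
non-negative vector, so `t ↦ ‖Mᵗ x‖` is monotone. If it stayed bounded, the integer vectors
`Mᵗ x` would take finitely many values, so `w := Mᵃ x ≠ 0` is fixed by `A := Mᵇ⁻ᵃ` for some
`a < b`. Then `‖Aˢ w‖ = ‖w‖` forces every column of every `Aˢ` in the support of `w` to have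
sum `1`, i.e. to be a coordinate vector; by pigeonhole some `Aᵖ` fixes a coordinate vector.
Conversely, if `Mᵏ eᵢ ∈ {eᵢ, 0}` then `‖M^{kt} eᵢ‖ ≤ 1` for all `t ≥ 1`.
-/

open Filter Matrix

noncomputable section

open Finset

section Semiring

variable {ι R : Type*} [Fintype ι] [Semiring R]

theorem sum_mulVec_eq_sum_col_mul (A : Matrix ι ι R) (x : ι → R) :
    ∑ i, (A *ᵥ x) i = ∑ j, (∑ i, A i j) * x j := by
  simp only [mulVec, dotProduct, Finset.sum_mul]
  exact Finset.sum_comm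

theorem pow_mulVec_eq_self [DecidableEq ι] {A : Matrix ι ι R} {u : ι → R} (h : A *ᵥ u = u)
    (s : ℕ) : A ^ s *ᵥ u = u := by
  induction s with
  | zero => simp
  | succ s ih => rw [pow_succ, ← mulVec_mulVec, h, ih]

end Semiring

theorem exists_lt_eq_of_sum_le {ι : Type*} [Fintype ι] [DecidableEq ι] (f : ℕ → ι → ℕ) (B : ℕ)
    (hB : ∀ t, ∑ i, f t i ≤ B) : ∃ a b, a < b ∧ f a = f b :=
  (Set.finite_Iic fun _ : ι => B).exists_lt_map_eq_of_forall_mem fun t =>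
    Set.mem_Iic.2 fun i =>
      (single_le_sum (f := f t) (fun _ _ => Nat.zero_le _) (mem_univ i)).trans (hB t)

theorem exists_eq_single_of_sum_eq_one {ι : Type*} [Fintype ι] [DecidableEq ι] {u : ι → ℕ}
    (hu : ∑ i, u i = 1) : ∃ j, u = Pi.single j 1 := by
  obtain ⟨j, hj⟩ := (Finsupp.sum_eq_one_iff (Finsupp.equivFunOnFinite.symm u)).1
    (by rwa [Finsupp.sum_fintype _ _ (fun _ => rfl)])
  exact ⟨j, by simpa [← Finsupp.single_eq_pi_single] using congrArg DFunLike.coe hj⟩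

section NatMatrix

variable {ι : Type*} [Fintype ι] (N : Matrix ι ι ℕ)

theorem sum_le_sum_mulVec (hN : ∀ j, 1 ≤ ∑ i, N i j) (x : ι → ℕ) :
    ∑ i, x i ≤ ∑ i, (N *ᵥ x) i := by
  rw [sum_mulVec_eq_sum_col_mul]
  gcongr with j
  exact Nat.le_mul_of_pos_left _ (hN j)

variable [DecidableEq ι]

theorem monotone_sum_pow_mulVec (hN : ∀ j, 1 ≤ ∑ i, N i j) (x : ι → ℕ) :
    Monotone fun t => ∑ i, (N ^ t *ᵥ x) i :=
  monotone_nat_of_le_succ fun t => by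
    rw [pow_succ', ← mulVec_mulVec]
    exact sum_le_sum_mulVec N hN _

theorem sum_le_sum_pow_mulVec (hN : ∀ j, 1 ≤ ∑ i, N i j) (x : ι → ℕ) (t : ℕ) :
    ∑ i, x i ≤ ∑ i, (N ^ t *ᵥ x) i := by
  simpa using monotone_sum_pow_mulVec N hN x (Nat.zero_le t)

theorem one_le_sum_pow_col (hN : ∀ j, 1 ≤ ∑ i, N i j) (t : ℕ) (j : ι) :
    1 ≤ ∑ i, (N ^ t) i j := by
  simpa [mulVec_single_one] using sum_le_sum_pow_mulVec N hN (Pi.single j 1) t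

theorem exists_pow_mulVec_single_eq_self (hN : ∀ j, 1 ≤ ∑ i, N i j) {w : ι → ℕ}
    (hw : N *ᵥ w = w) (hw0 : w ≠ 0) :
    ∃ j p, 0 < p ∧ N ^ p *ᵥ Pi.single j 1 = Pi.single j 1 := by
  obtain ⟨m, hm⟩ := Function.ne_iff.1 hw0
  have hcol_m : ∀ s, ∑ i, (N ^ s *ᵥ Pi.single m 1) i = 1 := by
    intro s
    have hle : ∀ j ∈ univ, w j ≤ (∑ i, (N ^ s) i j) * w j := fun j _ =>
      Nat.le_mul_of_pos_left _ (one_le_sum_pow_col N hN s j)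
    have hsum : ∑ j, w j = ∑ j, (∑ i, (N ^ s) i j) * w j := by
      rw [← sum_mulVec_eq_sum_col_mul, pow_mulVec_eq_self hw]
    have hm_eq := (sum_eq_sum_iff_of_le hle).1 hsum m (mem_univ m)
    simpa [mulVec_single_one] using (Nat.eq_of_mul_eq_mul_right (Nat.pos_of_ne_zero hm)
      ((one_mul _).trans hm_eq)).symm
  obtain ⟨a, b, hab, hab_eq⟩ :=
    exists_lt_eq_of_sum_le (fun s => N ^ s *ᵥ Pi.single m 1) 1 fun s => (hcol_m s).le
  obtain ⟨j, hj⟩ := exists_eq_single_of_sum_eq_one (hcol_m a)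
  refine ⟨j, b - a, Nat.sub_pos_of_lt hab, ?_⟩
  rw [← hj, mulVec_mulVec, ← pow_add, Nat.sub_add_cancel hab.le]
  exact hab_eq.symm

theorem tendsto_sum_pow_mulVec
    (hfix : ∀ i k, 0 < k → N ^ k *ᵥ Pi.single i 1 ≠ Pi.single i 1)
    (hkill : ∀ i k, 0 < k → N ^ k *ᵥ Pi.single i 1 ≠ 0) {x : ι → ℕ} (hx : x ≠ 0) :
    Tendsto (fun t => ∑ i, (N ^ t *ᵥ x) i) atTop atTop := by
  have hN : ∀ j, 1 ≤ ∑ i, N i j := by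
    intro j
    by_contra! h
    refine hkill j 1 one_pos ?_
    ext i
    simpa [mulVec_single_one] using (sum_eq_zero_iff.1 (Nat.lt_one_iff.1 h)) i (mem_univ i)
  refine tendsto_atTop_atTop_of_monotone (monotone_sum_pow_mulVec N hN x) ?_
  by_contra! hbdd
  obtain ⟨B, hB⟩ := hbdd
  obtain ⟨a, b, hab, hab_eq⟩ :=
    exists_lt_eq_of_sum_le (fun t => N ^ t *ᵥ x) B fun t => (hB t).le
  have hw : N ^ (b - a) *ᵥ (N ^ a *ᵥ x) = N ^ a *ᵥ x := by
    rw [mulVec_mulVec, ← pow_add, Nat.sub_add_cancel hab.le]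
    exact hab_eq.symm
  have hw0 : N ^ a *ᵥ x ≠ 0 := fun h0 => hx <| by
    simpa [h0, sum_eq_zero_iff, funext_iff] using sum_le_sum_pow_mulVec N hN x a
  obtain ⟨j, p, hp, hjp⟩ :=
    exists_pow_mulVec_single_eq_self (N ^ (b - a)) (one_le_sum_pow_col N hN _) hw hw0
  exact hfix j ((b - a) * p) (Nat.mul_pos (Nat.sub_pos_of_lt hab) hp) (by rwa [pow_mul])

end NatMatrix

section Real

variable {ι : Type*} [Fintype ι]

theorem mul_sum_col_le_l1_mulVec {A : Matrix ι ι ℝ} (hA : ∀ i j, 0 ≤ A i j) {v : ι → ℝ}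
    (hv : ∀ i, 0 ≤ v i) (l : ι) : v l * ∑ i, A i l ≤ l1 (A *ᵥ v) := by
  rw [mul_sum]
  refine sum_le_sum fun i _ => ?_
  calc v l * A i l = A i l * v l := mul_comm _ _
    _ ≤ (A *ᵥ v) i :=
      single_le_sum (f := fun j => A i j * v j) (fun j _ => mul_nonneg (hA i j) (hv j))
        (mem_univ l)
    _ ≤ |(A *ᵥ v) i| := le_abs_self _

variable [DecidableEq ι]

theorem map_natCast_pow (N : Matrix ι ι ℕ) (k : ℕ) :
    N.map ((↑) : ℕ → ℝ) ^ k = (N ^ k).map (↑) :=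
  (Matrix.map_pow N (Nat.castRingHom ℝ) k).symm

theorem map_natCast_pow_mulVec_single (N : Matrix ι ι ℕ) (k : ℕ) (i : ι) :
    N.map ((↑) : ℕ → ℝ) ^ k *ᵥ Pi.single i 1 = fun j => ((N ^ k *ᵥ Pi.single i 1) j : ℝ) := by
  ext j
  simp [map_natCast_pow]

theorem tendsto_l1_pow_mulVec_of_matExpanding (N : Matrix ι ι ℕ)
    (hN : MatExpanding (N.map ((↑) : ℕ → ℝ))) {v : ι → ℝ} (hv : ∀ i, 0 ≤ v i) (hv0 : v ≠ 0) :
    Tendsto (fun t => l1 (N.map ((↑) : ℕ → ℝ) ^ t *ᵥ v)) atTop atTop := by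
  have hfix : ∀ i k, 0 < k → N ^ k *ᵥ Pi.single i 1 ≠ Pi.single i 1 := by
    intro i k hk h
    refine hN ⟨i, k, hk, Or.inl ?_⟩
    rw [map_natCast_pow_mulVec_single, h]
    ext j
    simp [Pi.single_apply]
  have hkill : ∀ i k, 0 < k → N ^ k *ᵥ Pi.single i 1 ≠ 0 := by
    intro i k hk h
    refine hN ⟨i, k, hk, Or.inr ?_⟩
    rw [map_natCast_pow_mulVec_single, h]
    ext j
    simp
  obtain ⟨l, hl⟩ : ∃ l, 0 < v l := by
    obtain ⟨l, hl⟩ := Function.ne_iff.1 hv0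
    exact ⟨l, (hv l).lt_of_ne' hl⟩
  have hsingle : (Pi.single l 1 : ι → ℕ) ≠ 0 := by simp
  have hcol := tendsto_sum_pow_mulVec N hfix hkill hsingle
  refine tendsto_atTop_mono (fun t => ?_)
    ((tendsto_natCast_atTop_atTop.comp hcol).const_mul_atTop hl)
  calc v l * ((∑ i, (N ^ t *ᵥ Pi.single l 1) i : ℕ) : ℝ)
      = v l * ∑ i, (N.map ((↑) : ℕ → ℝ) ^ t) i l := by
        simp [map_natCast_pow]
    _ ≤ l1 (N.map ((↑) : ℕ → ℝ) ^ t *ᵥ v) := by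
        refine mul_sum_col_le_l1_mulVec (fun i j => ?_) hv l
        rw [map_natCast_pow]
        exact Nat.cast_nonneg _

theorem matExpanding_of_tendsto_l1 {M : Matrix ι ι ℝ}
    (h : ∀ v : ι → ℝ, (∀ i, 0 ≤ v i) → v ≠ 0 →
      Tendsto (fun t : ℕ => l1 (M ^ t *ᵥ v)) atTop atTop) :
    MatExpanding M := by
  rintro ⟨i, k, hk, hik⟩
  set u := M ^ k *ᵥ Pi.single i 1
  have hu : M ^ k *ᵥ u = u := by
    rcases hik with hik | hik <;> simp only [u, hik, mulVec_zero]
  have hu_l1 : l1 u ≤ 1 := by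
    rcases hik with hik | hik <;> simp [u, hik, l1, Pi.single_apply, apply_ite abs]
  have hper : ∀ s, M ^ (k * s + k) *ᵥ Pi.single i 1 = u := fun s => by
    rw [pow_add, ← mulVec_mulVec, pow_mul, pow_mulVec_eq_self hu]
  have hsingle : 0 ≤ (Pi.single i 1 : ι → ℝ) := Pi.single_nonneg.2 zero_le_one
  have hgt := (h _ hsingle (Pi.single_ne_zero_iff.2 one_ne_zero)).eventually_gt_atTop 1
  obtain ⟨T, hT⟩ := eventually_atTop.1 hgt
  have hT' := hT (k * T + k) (Nat.le_add_right_of_le (Nat.le_mul_of_pos_left T hk))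
  rw [hper] at hT'
  linarith

end Real

/-- A non-negative integer square matrix is expanding iff the ℓ¹-norms `‖M^t v‖`
tend to infinity for every non-negative `v ≠ 0`. -/
theorem statement1 {n : ℕ} (M : Matrix (Fin n) (Fin n) ℝ)
    (hZ : ∀ i j, ∃ z : ℕ, M i j = (z : ℝ)) :
    MatExpanding M ↔
      ∀ v : Fin n → ℝ, (∀ i, 0 ≤ v i) → v ≠ 0 →
        Tendsto (fun t : ℕ => l1 ((M ^ t).mulVec v)) atTop atTop := by
  choose N hN using hZ
  obtain rfl : M = (Matrix.of N).map (↑) := by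
    ext i j
    exact hN i j
  exact ⟨fun h _ hv hv0 => tendsto_l1_pow_mulVec_of_matExpanding _ h hv hv0,
    matExpanding_of_tendsto_l1⟩
end
end

section
/- Let M be a non-negative integer square matrix in primitive Frobenius form with no zero columns, B be a principal block with PF-eigenvalue λ, and C(B) its dependency block union. Then there exists an eigenvector v(B) of M with eigenvalue λ of the form v(B) = v^PF + w, where v^PF is the extended Perron-Frobenius eigenvector of the diagonal block of B and w lies in the cone of C(B); moreover any eigenvector of M in the cone of B ∪ C(B) is either contained in the cone of C(B) or is a positive scalar multiple of v(B). -/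
open Filter Matrix

noncomputable section

/-- The relation `B_p ≻ B_q` on the blocks of `M` (blocks given by `b`):
some positive power of `M` has a positive entry in block row `q`, block column `p`. -/
def Succ {n m : ℕ} (M : Matrix (Fin n) (Fin n) ℝ) (b : Fin n → Fin m) (p q : Fin m) : Prop :=
  p ≠ q ∧ ∃ t : ℕ, 1 ≤ t ∧ ∃ r c, b r = q ∧ b c = p ∧ 0 < (M ^ t) r c

/-!
Write `P` for the block `B_p` and `D` for `C(B_p)`. Gluing Perron eigenvectors of the blocks in
`D`, the block of level `q` weighted by `E ^ q` for a large `E`, gives `X ≥ 0`, positive exactly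
on `D`, with `M X ≤ ρ X` for some `ρ < lam`; this is where principality enters. So `M / lam`
contracts geometrically on vectors supported on `D`. The defect `r = M vPF - lam vPF` is
nonnegative and supported on `D`, hence the Neumann series `w = ∑ₜ lam⁻¹ ^ (t + 1) Mᵗ r`
converges and `v = vPF + w` is a `lam`-eigenvector. Conversely, an eigenvector `u` in the cone of
`P ∪ D` that does not vanish on `P` restricts to a nonnegative eigenvector of the primitive block
`P`, which by Perron's theorem is `c vPF` with eigenvalue `lam`; then `u - c v` is a
`lam`-eigenvector supported on `D`, and the contraction forces it to vanish.
-/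

open Finset

section NonnegMatrix

variable {ι : Type*} [Fintype ι] {M : Matrix ι ι ℝ}

lemma mulVec_mono_of_nonneg (hM : ∀ i j, 0 ≤ M i j) {x y : ι → ℝ} (h : x ≤ y) :
    M *ᵥ x ≤ M *ᵥ y :=
  fun i => sum_le_sum fun j _ => mul_le_mul_of_nonneg_left (h j) (hM i j)

lemma mulVec_nonneg_of_nonneg (hM : ∀ i j, 0 ≤ M i j) {x : ι → ℝ} (hx : 0 ≤ x) :
    0 ≤ M *ᵥ x := by
  simpa using mulVec_mono_of_nonneg hM hx

lemma abs_mulVec_le (hM : ∀ i j, 0 ≤ M i j) (x : ι → ℝ) : |M *ᵥ x| ≤ M *ᵥ |x| := fun i =>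
  (abs_sum_le_sum_abs _ _).trans_eq <|
    sum_congr rfl fun j _ => by rw [abs_mul, abs_of_nonneg (hM i j), Pi.abs_apply]

lemma mulVec_apply_pos (hM : ∀ i j, 0 < M i j) {x : ι → ℝ} (hx : 0 ≤ x) (hx0 : x ≠ 0) (i : ι) :
    0 < (M *ᵥ x) i := by
  obtain ⟨j, hj⟩ := Function.ne_iff.1 hx0
  exact sum_pos' (fun k _ => mul_nonneg (hM i k).le (hx k))
    ⟨j, mem_univ j, mul_pos (hM i j) ((hx j).lt_of_ne' hj)⟩

lemma exists_abs_le_smul {X z : ι → ℝ} (hX : 0 ≤ X) (hz : ∀ i, z i ≠ 0 → 0 < X i) :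
    ∃ K : ℝ, 0 ≤ K ∧ |z| ≤ K • X := by
  have hterm : ∀ i, 0 ≤ |z i| / X i := fun i => div_nonneg (abs_nonneg _) (hX i)
  refine ⟨∑ i, |z i| / X i, sum_nonneg fun i _ => hterm i, fun i => ?_⟩
  rcases eq_or_ne (z i) 0 with h | h
  · simpa [h] using mul_nonneg (sum_nonneg fun j _ => hterm j) (hX i)
  · calc |z| i = |z i| / X i * X i := (div_mul_cancel₀ _ (hz i h).ne').symm
      _ ≤ (∑ j, |z j| / X j) * X i :=
        mul_le_mul_of_nonneg_right (single_le_sum (fun j _ => hterm j) (mem_univ i)) (hX i)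

lemma mul_sum_offLevel_le (hM : ∀ i j, 0 ≤ M i j) {ℓ : ι → ℕ}
    (hlow : ∀ i j, ℓ i < ℓ j → M i j = 0) {u : ι → ℝ} (hu : 0 ≤ u) {E : ℝ} (hE : 1 ≤ E)
    (i : ι) :
    E * ∑ j ∈ univ.filter (fun j => ℓ j ≠ ℓ i), M i j * (E ^ ℓ j * u j) ≤
      E ^ ℓ i * (M *ᵥ u) i := by
  have hterm : ∀ j, 0 ≤ E ^ ℓ i * (M i j * u j) := fun j =>
    mul_nonneg (pow_nonneg (zero_le_one.trans hE) _) (mul_nonneg (hM i j) (hu j))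
  rw [mul_sum, mulVec, dotProduct, mul_sum]
  refine (sum_le_sum fun j hj => ?_).trans (sum_le_univ_sum_of_nonneg hterm)
  rcases lt_or_gt_of_ne (mem_filter.1 hj).2 with h | h
  · calc E * (M i j * (E ^ ℓ j * u j)) = E ^ (ℓ j + 1) * (M i j * u j) := by ring
      _ ≤ E ^ ℓ i * (M i j * u j) :=
        mul_le_mul_of_nonneg_right (pow_le_pow_right₀ hE h) (mul_nonneg (hM i j) (hu j))
  · simp [hlow i j h]

/- Weighting level `ℓ` by `E ^ ℓ` for a large `E` makes the entries below the diagonal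
blocks negligible against `δ`. -/
lemma exists_mulVec_le_of_blockTriangular (hM : ∀ i j, 0 ≤ M i j) (ℓ : ι → ℕ)
    (hlow : ∀ i j, ℓ i < ℓ j → M i j = 0) {u : ι → ℝ} (hu : 0 ≤ u)
    (hMu : ∀ i, (M *ᵥ u) i ≠ 0 → 0 < u i) {ρ δ : ℝ} (hδ : 0 < δ)
    (hdiag : ∀ i, ∑ j ∈ univ.filter (fun j => ℓ j = ℓ i), M i j * u j ≤ ρ * u i) :
    ∃ E : ℝ, 0 < E ∧ M *ᵥ (fun i => E ^ ℓ i * u i) ≤ (ρ + δ) • fun i => E ^ ℓ i * u i := by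
  obtain ⟨K, -, hK⟩ := exists_abs_le_smul hu hMu
  set E := max 1 (K / δ)
  have hE : 1 ≤ E := le_max_left _ _
  have hE0 : 0 < E := one_pos.trans_le hE
  have hKE : K ≤ δ * E := (div_le_iff₀' hδ).1 (le_max_right _ _)
  refine ⟨E, hE0, fun i => ?_⟩
  have hEi : 0 < E ^ ℓ i := pow_pos hE0 _
  have hsame : ∑ j ∈ univ.filter (fun j => ℓ j = ℓ i), M i j * (E ^ ℓ j * u j) =
      E ^ ℓ i * ∑ j ∈ univ.filter (fun j => ℓ j = ℓ i), M i j * u j := by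
    rw [mul_sum]
    exact sum_congr rfl fun j hj => by rw [(mem_filter.1 hj).2]; ring
  have hMuE : (M *ᵥ u) i ≤ δ * E * u i :=
    (le_abs_self _).trans ((hK i).trans (mul_le_mul_of_nonneg_right hKE (hu i)))
  have hoff := mul_sum_offLevel_le hM hlow hu hE i
  have hdiagE := mul_le_mul_of_nonneg_left (hdiag i) hEi.le
  have hMuE' := mul_le_mul_of_nonneg_left hMuE hEi.le
  change ∑ j, M i j * (E ^ ℓ j * u j) ≤ (ρ + δ) * (E ^ ℓ i * u i)
  rw [← sum_filter_add_sum_filter_not univ (fun j => ℓ j = ℓ i), hsame]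
  nlinarith

variable [DecidableEq ι]

lemma pow_add_apply_pos (hM : ∀ i j, 0 ≤ M i j) {s t : ℕ} {i l j : ι}
    (h₁ : 0 < (M ^ s) i l) (h₂ : 0 < (M ^ t) l j) : 0 < (M ^ (s + t)) i j := by
  rw [pow_add, mul_apply]
  exact sum_pos' (fun r _ => mul_nonneg (pow_apply_nonneg hM s i r) (pow_apply_nonneg hM t r j))
    ⟨l, mem_univ l, mul_pos h₁ h₂⟩

lemma pow_mulVec_of_mulVec_eq_smul {μ : ℝ} {x : ι → ℝ} (h : M *ᵥ x = μ • x) (t : ℕ) :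
    (M ^ t) *ᵥ x = μ ^ t • x := by
  induction t with
  | zero => simp
  | succ t ih => rw [pow_succ', ← mulVec_mulVec, ih, mulVec_smul, h, smul_smul, ← pow_succ]

lemma pow_mulVec_le_of_mulVec_le (hM : ∀ i j, 0 ≤ M i j) {ρ : ℝ} (hρ : 0 ≤ ρ) {x : ι → ℝ}
    (h : M *ᵥ x ≤ ρ • x) (t : ℕ) : (M ^ t) *ᵥ x ≤ ρ ^ t • x := by
  induction t with
  | zero => simp
  | succ t ih =>
    calc (M ^ (t + 1)) *ᵥ x = M *ᵥ ((M ^ t) *ᵥ x) := by rw [pow_succ', mulVec_mulVec]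
      _ ≤ M *ᵥ (ρ ^ t • x) := mulVec_mono_of_nonneg hM ih
      _ = ρ ^ t • (M *ᵥ x) := mulVec_smul _ _ _
      _ ≤ ρ ^ t • ρ • x := smul_le_smul_of_nonneg_left h (pow_nonneg hρ t)
      _ = ρ ^ (t + 1) • x := by rw [smul_smul, pow_succ]

lemma abs_pow_mulVec_le (hM : ∀ i j, 0 ≤ M i j) {ρ K : ℝ} {X z : ι → ℝ} (hρ : 0 ≤ ρ)
    (hMX : M *ᵥ X ≤ ρ • X) (hK : 0 ≤ K) (hz : |z| ≤ K • X) (t : ℕ) :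
    |(M ^ t) *ᵥ z| ≤ (K * ρ ^ t) • X :=
  calc |(M ^ t) *ᵥ z| ≤ (M ^ t) *ᵥ |z| := abs_mulVec_le (pow_apply_nonneg hM t) z
    _ ≤ (M ^ t) *ᵥ (K • X) := mulVec_mono_of_nonneg (pow_apply_nonneg hM t) hz
    _ = K • ((M ^ t) *ᵥ X) := mulVec_smul _ _ _
    _ ≤ K • ρ ^ t • X :=
      smul_le_smul_of_nonneg_left (pow_mulVec_le_of_mulVec_le hM hρ hMX t) hK
    _ = (K * ρ ^ t) • X := smul_smul _ _ _

/- `lam ^ t |z| = |Mᵗ z| ≤ K ρ ^ t X` for all `t` forces `z = 0`. -/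
lemma eq_zero_of_mulVec_eq_smul_of_subinvariant (hM : ∀ i j, 0 ≤ M i j) {ρ lam : ℝ}
    {X z : ι → ℝ} (hX : 0 ≤ X) (hρ : 0 ≤ ρ) (hρlam : ρ < lam) (hMX : M *ᵥ X ≤ ρ • X)
    (hz : M *ᵥ z = lam • z) (hzX : ∀ i, z i ≠ 0 → 0 < X i) : z = 0 := by
  obtain ⟨K, hK, hzK⟩ := exists_abs_le_smul hX hzX
  have hlam : 0 < lam := hρ.trans_lt hρlam
  funext i
  have hbound : ∀ t : ℕ, |z i| ≤ K * X i * (ρ / lam) ^ t := fun t => by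
    have h := abs_pow_mulVec_le hM hρ hMX hK hzK t i
    rw [pow_mulVec_of_mulVec_eq_smul hz, Pi.abs_apply, Pi.smul_apply, Pi.smul_apply, smul_eq_mul,
      smul_eq_mul, abs_mul, abs_of_pos (pow_pos hlam t)] at h
    rw [div_pow, ← mul_div_assoc, le_div_iff₀ (pow_pos hlam t)]
    linarith
  have hlim : Tendsto (fun t : ℕ => K * X i * (ρ / lam) ^ t) atTop (nhds 0) := by
    simpa using (tendsto_pow_atTop_nhds_zero_of_lt_one (div_nonneg hρ hlam.le)
      ((div_lt_one hlam).2 hρlam)).const_mul (K * X i)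
  exact abs_nonpos_iff.1 (ge_of_tendsto' hlim hbound)

/- The solution is the Neumann series `w = ∑ₜ lam⁻¹ ^ (t + 1) • Mᵗ r`. -/
lemma exists_nonneg_mulVec_eq_sub (hM : ∀ i j, 0 ≤ M i j) {ρ lam : ℝ} {X r : ι → ℝ}
    (hX : 0 ≤ X) (hρ : 0 ≤ ρ) (hρlam : ρ < lam) (hMX : M *ᵥ X ≤ ρ • X) (hr : 0 ≤ r)
    (hrX : ∀ i, r i ≠ 0 → 0 < X i) :
    ∃ w : ι → ℝ, 0 ≤ w ∧ (∀ i, w i ≠ 0 → 0 < X i) ∧ M *ᵥ w = lam • w - r := by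
  obtain ⟨K, hK, hrK⟩ := exists_abs_le_smul hX hrX
  have hlam : 0 < lam := hρ.trans_lt hρlam
  set f : ℕ → ι → ℝ := fun t => lam⁻¹ ^ (t + 1) • ((M ^ t) *ᵥ r)
  have hf0 : ∀ t, 0 ≤ f t := fun t =>
    smul_nonneg (by positivity) (mulVec_nonneg_of_nonneg (pow_apply_nonneg hM t) hr)
  have hfX : ∀ t i, f t i ≤ lam⁻¹ * K * X i * (ρ / lam) ^ t := fun t i => by
    have h := (le_abs_self _).trans (abs_pow_mulVec_le hM hρ hMX hK hrK t i)
    have h' := mul_le_mul_of_nonneg_left h (pow_nonneg (inv_nonneg.2 hlam.le) (t + 1))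
    simp only [f, Pi.smul_apply, smul_eq_mul] at h' ⊢
    refine h'.trans_eq ?_
    rw [div_eq_mul_inv, mul_pow, inv_pow, pow_succ]
    ring
  have hgeom := summable_geometric_of_lt_one (div_nonneg hρ hlam.le) ((div_lt_one hlam).2 hρlam)
  have hsum : Summable f := Pi.summable.2 fun i =>
    Summable.of_nonneg_of_le (fun t => hf0 t i) (hfX · i) (hgeom.mul_left _)
  refine ⟨∑' t, f t, tsum_nonneg hf0, fun i hi => ?_, ?_⟩
  · refine (hX i).lt_of_ne' fun hXi => hi ?_
    rw [tsum_apply hsum]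
    exact (tsum_congr fun t => le_antisymm (by simpa [hXi] using hfX t i) (hf0 t i)).trans tsum_zero
  · have hshift : HasSum (fun t => f (t + 1)) (∑' t, f t - f 0) := by
      simpa using (hasSum_nat_add_iff' 1).2 hsum.hasSum
    have hM' : HasSum (fun t => M *ᵥ f t) (M *ᵥ ∑' t, f t) :=
      hsum.hasSum.map (mulVecLin M) (continuous_const.matrix_mulVec continuous_id)
    have hstep : ∀ t, M *ᵥ f t = lam • f (t + 1) := fun t => by
      simp only [f, mulVec_smul, mulVec_mulVec, ← pow_succ', smul_smul]
      rw [pow_succ' _ (t + 1), ← mul_assoc, mul_inv_cancel₀ hlam.ne', one_mul]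
    rw [hM'.unique ((funext hstep ▸ hshift.const_smul lam) :), smul_sub]
    simp [f, hlam.ne']

end NonnegMatrix

section Perron

variable {ι : Type*} [Fintype ι] {A : Matrix ι ι ℝ}

def collatzWielandt [Nonempty ι] (A : Matrix ι ι ℝ) (y : ι → ℝ) : ℝ :=
  univ.inf' univ_nonempty fun i => (A *ᵥ y) i / y i

lemma collatzWielandt_smul_le [Nonempty ι] {y : ι → ℝ} (hy : ∀ i, 0 < y i) :
    collatzWielandt A y • y ≤ A *ᵥ y := fun i =>
  (le_div_iff₀ (hy i)).1 (inf'_le _ (mem_univ i))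

lemma lt_collatzWielandt [Nonempty ι] {c : ℝ} {y : ι → ℝ} (hy : ∀ i, 0 < y i)
    (h : ∀ i, c * y i < (A *ᵥ y) i) : c < collatzWielandt A y :=
  (lt_inf'_iff _).2 fun i _ => (lt_div_iff₀ (hy i)).2 (h i)

lemma continuousOn_collatzWielandt [Nonempty ι] :
    ContinuousOn (collatzWielandt A) {y | ∀ i, 0 < y i} :=
  ContinuousOn.finset_inf'_apply _ fun i _ =>
    ((continuous_apply i).comp (continuous_const.matrix_mulVec continuous_id)).continuousOn.div
      (continuous_apply i).continuousOn fun _ hy => (hy i).ne'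

lemma exists_le_smul_eq [Nonempty ι] (x : ι → ℝ) {y : ι → ℝ} (hy : ∀ i, 0 < y i) :
    ∃ (c : ℝ) (i₀ : ι), x ≤ c • y ∧ x i₀ = c * y i₀ := by
  obtain ⟨i₀, -, hmax⟩ := exists_max_image univ (fun i => x i / y i) univ_nonempty
  exact ⟨x i₀ / y i₀, i₀, fun i => (div_le_iff₀ (hy i)).1 (hmax i (mem_univ i)),
    (div_mul_cancel₀ _ (hy i₀).ne').symm⟩

lemma eigenvalue_le_of_pos_eigenvector [Nonempty ι] (hA : ∀ i j, 0 ≤ A i j) {α β : ℝ}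
    {x y : ι → ℝ} (hx : ∀ i, 0 < x i) (hAx : A *ᵥ x = α • x) (hy : ∀ i, 0 < y i)
    (hAy : A *ᵥ y = β • y) : α ≤ β := by
  obtain ⟨c, i₀, hle, heq⟩ := exists_le_smul_eq x hy
  have h := mulVec_mono_of_nonneg hA hle i₀
  simp only [hAx, mulVec_smul, hAy, Pi.smul_apply, smul_eq_mul, heq] at h
  have hpos : 0 < c * y i₀ := heq ▸ hx i₀
  exact le_of_mul_le_mul_right (by linarith) hpos

variable [DecidableEq ι]

/- Since `A` commutes with `Aᵏ > 0`, a strict defect in `c y ≤ A y` becomes strict in every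
coordinate after applying `Aᵏ`. -/
lemma smul_lt_mulVec_pow_mulVec {k : ℕ} (hk : ∀ i j, 0 < (A ^ k) i j) {c : ℝ} {x : ι → ℝ}
    (hle : c • x ≤ A *ᵥ x) (hne : A *ᵥ x ≠ c • x) (i : ι) :
    c * ((A ^ k) *ᵥ x) i < (A *ᵥ ((A ^ k) *ᵥ x)) i := by
  have hsplit : A *ᵥ ((A ^ k) *ᵥ x) = c • ((A ^ k) *ᵥ x) + (A ^ k) *ᵥ (A *ᵥ x - c • x) := by
    rw [mulVec_sub, mulVec_smul, mulVec_mulVec, mulVec_mulVec, ← pow_succ', pow_succ]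
    abel
  have := mulVec_apply_pos hk (sub_nonneg.2 hle) (sub_ne_zero.2 hne) i
  rw [hsplit, Pi.add_apply, Pi.smul_apply, smul_eq_mul]
  linarith

/- Collatz–Wielandt: a maximiser of `collatzWielandt A` on the compact set `Aᵏ (simplex)`
is an eigenvector. -/
lemma exists_pos_eigenvector_of_primitive (hprim : _root_.IsPrimitive A) :
    ∃ (ρ : ℝ) (u : ι → ℝ), (∀ i, 0 < u i) ∧ A *ᵥ u = ρ • u := by
  rcases isEmpty_or_nonempty ι with hι | hι
  · exact ⟨0, 0, isEmptyElim, Subsingleton.elim _ _⟩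
  obtain ⟨k, -, hk⟩ := hprim
  set S := ((A ^ k) *ᵥ ·) '' stdSimplex ℝ ι
  have hS : ∀ x ∈ stdSimplex ℝ ι, (A ^ k) *ᵥ x ∈ S := fun x hx => Set.mem_image_of_mem _ hx
  have hSpos : ∀ y ∈ S, ∀ i, 0 < y i := by
    rintro _ ⟨x, hx, rfl⟩
    refine mulVec_apply_pos hk hx.1 fun h => ?_
    simpa [h] using hx.2
  obtain ⟨y, hyS, hmax⟩ :=
    ((isCompact_stdSimplex ℝ ι).image (continuous_const.matrix_mulVec continuous_id)).exists_isMaxOn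
      ⟨_, hS _ (single_mem_stdSimplex ℝ (Classical.arbitrary ι))⟩
      (continuousOn_collatzWielandt.mono hSpos)
  have hy := hSpos y hyS
  refine ⟨collatzWielandt A y, y, hy, ?_⟩
  by_contra hne
  set l := ∑ i, y i
  have hl : 0 < l := sum_pos (fun i _ => hy i) univ_nonempty
  have hx : l⁻¹ • y ∈ stdSimplex ℝ ι :=
    ⟨fun i => smul_nonneg (inv_nonneg.2 hl.le) (hy i).le, by simp [← mul_sum, l, hl.ne']⟩
  have hxle : collatzWielandt A y • l⁻¹ • y ≤ A *ᵥ (l⁻¹ • y) := by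
    rw [smul_comm, mulVec_smul]
    exact smul_le_smul_of_nonneg_left (collatzWielandt_smul_le hy) (inv_nonneg.2 hl.le)
  have hxne : A *ᵥ (l⁻¹ • y) ≠ collatzWielandt A y • l⁻¹ • y := by
    rw [smul_comm, mulVec_smul]
    exact fun h => hne (smul_right_injective _ (inv_ne_zero hl.ne') h)
  exact (hmax (hS _ hx)).not_gt
    (lt_collatzWielandt (hSpos _ (hS _ hx)) (smul_lt_mulVec_pow_mulVec hk hxle hxne))

lemma pos_of_nonneg_eigenvector (hprim : _root_.IsPrimitive A) {μ : ℝ} {x : ι → ℝ}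
    (hx : 0 ≤ x) (hx0 : x ≠ 0) (hAx : A *ᵥ x = μ • x) (i : ι) : 0 < x i := by
  obtain ⟨k, -, hk⟩ := hprim
  have h := mulVec_apply_pos hk hx hx0 i
  rw [pow_mulVec_of_mulVec_eq_smul hAx, Pi.smul_apply, smul_eq_mul] at h
  exact pos_of_mul_pos_right h (pos_of_mul_pos_left h (hx i)).le

lemma eigenvalue_pos_of_primitive (hA : ∀ i j, 0 ≤ A i j) (hprim : _root_.IsPrimitive A)
    {μ : ℝ} {x : ι → ℝ} (hx : 0 ≤ x) (hx0 : x ≠ 0) (hAx : A *ᵥ x = μ • x) : 0 < μ := by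
  obtain ⟨i, -⟩ := Function.ne_iff.1 hx0
  have hxi := pos_of_nonneg_eigenvector hprim hx hx0 hAx i
  have hμ : 0 ≤ μ * x i := by
    simpa [hAx] using mulVec_nonneg_of_nonneg hA hx i
  obtain ⟨k, hk, hpos⟩ := hprim
  refine (nonneg_of_mul_nonneg_left hμ hxi).lt_of_ne' fun h => ?_
  have := mulVec_apply_pos hpos hx hx0 i
  simp [pow_mulVec_of_mulVec_eq_smul hAx, h, zero_pow hk.ne'] at this

lemma eq_smul_of_nonneg_eigenvector (hA : ∀ i j, 0 ≤ A i j) (hprim : _root_.IsPrimitive A)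
    {lam μ : ℝ} {x y : ι → ℝ} (hy : ∀ i, 0 < y i) (hAy : A *ᵥ y = lam • y) (hx : 0 ≤ x)
    (hx0 : x ≠ 0) (hAx : A *ᵥ x = μ • x) : μ = lam ∧ ∃ c : ℝ, 0 < c ∧ x = c • y := by
  obtain ⟨i, -⟩ := Function.ne_iff.1 hx0
  have : Nonempty ι := ⟨i⟩
  have hxpos := pos_of_nonneg_eigenvector hprim hx hx0 hAx
  obtain rfl : μ = lam := le_antisymm (eigenvalue_le_of_pos_eigenvector hA hxpos hAx hy hAy)
    (eigenvalue_le_of_pos_eigenvector hA hy hAy hxpos hAx)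
  obtain ⟨c, i₀, hle, heq⟩ := exists_le_smul_eq x hy
  -- `c • y - x` is a nonnegative eigenvector vanishing at `i₀`, hence zero
  have hz : c • y - x = 0 := by
    by_contra hz
    have := pos_of_nonneg_eigenvector hprim (sub_nonneg.2 hle) hz
      (by rw [mulVec_sub, mulVec_smul, hAy, hAx, smul_comm, smul_sub]) i₀
    simp [heq] at this
  exact ⟨rfl, c, pos_of_mul_pos_left (heq ▸ hxpos i₀) (hy i₀).le, (sub_eq_zero.1 hz).symm⟩

end Perron

section Blocks

variable {n m : ℕ} {M : Matrix (Fin n) (Fin n) ℝ} {b : Fin n → Fin m}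

lemma diagBlock_mulVec_apply {q : Fin m} (x : Fin n → ℝ) (i : Fin n) (hi : b i = q) :
    (diagBlock M b q *ᵥ fun s => x s) ⟨i, hi⟩ =
      ∑ j ∈ univ.filter (fun j => b j = q), M i j * x j :=
  (sum_subtype (p := fun j => b j = q) _ (fun _ => by simp) (fun j => M i j * x j)).symm

lemma diagBlock_mulVec_eq_smul {q : Fin m} {μ : ℝ} {x : Fin n → ℝ}
    (h : ∀ i, b i = q → ∑ j ∈ univ.filter (fun j => b j = q), M i j * x j = μ * x i) :
    (diagBlock M b q *ᵥ fun s => x s) = μ • fun s : {i // b i = q} => x s :=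
  funext fun s => (diagBlock_mulVec_apply x s s.2).trans (h s s.2)

lemma diagBlock_pow_apply_le (hM : ∀ i j, 0 ≤ M i j) (q : Fin m) (t : ℕ)
    (s s' : {i // b i = q}) : (diagBlock M b q ^ t) s s' ≤ (M ^ t) s s' := by
  induction t generalizing s' with
  | zero =>
    simp only [pow_zero, one_apply, Subtype.ext_iff]
    split_ifs <;> norm_num
  | succ t ih =>
    rw [pow_succ, mul_apply, pow_succ, mul_apply]
    calc ∑ r, (diagBlock M b q ^ t) s r * diagBlock M b q r s'
        ≤ ∑ r : {i // b i = q}, (M ^ t) s r * M r s' :=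
          sum_le_sum fun r _ => mul_le_mul_of_nonneg_right (ih r) (hM _ _)
      _ = ∑ r ∈ univ.filter (fun r => b r = q), (M ^ t) s r * M r s' :=
          (sum_subtype _ (fun _ => by simp) (fun r => (M ^ t) s r * M r s')).symm
      _ ≤ ∑ r, (M ^ t) s r * M r s' :=
          sum_le_univ_sum_of_nonneg fun r => mul_nonneg (pow_apply_nonneg hM t _ _) (hM _ _)

lemma pow_apply_eq_zero_of_lt (hlow : ∀ i j, b i < b j → M i j = 0) (t : ℕ) {i j : Fin n}
    (h : b i < b j) : (M ^ t) i j = 0 := by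
  induction t generalizing j with
  | zero => simp [one_apply_ne (show i ≠ j by rintro rfl; exact h.false)]
  | succ t ih =>
    rw [pow_succ, mul_apply]
    refine sum_eq_zero fun r _ => ?_
    rcases lt_or_ge (b i) (b r) with h' | h'
    · rw [ih h', zero_mul]
    · rw [hlow r j (h'.trans_lt h), mul_zero]

lemma Succ.lt (hlow : ∀ i j, b i < b j → M i j = 0) {p q : Fin m} (h : Succ M b p q) :
    p < q := by
  obtain ⟨hne, t, -, r, c, rfl, rfl, hpos⟩ := h
  exact (not_lt.1 fun hlt => hpos.ne' (pow_apply_eq_zero_of_lt hlow t hlt)).lt_of_ne hne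

lemma Succ.exists_pow_apply_pos (hM : ∀ i j, 0 ≤ M i j)
    (hdiag : ∀ q : Fin m, _root_.IsPrimitive (diagBlock M b q) ∨
      (∀ i j, b i = q → b j = q → i = j ∧ M i j = 0))
    {p q : Fin m} (h : Succ M b p q) {j : Fin n} (hj : b j = q) :
    ∃ t, 1 ≤ t ∧ ∃ c, b c = p ∧ 0 < (M ^ t) j c := by
  obtain ⟨-, t, ht, r, c, hr, hc, hpos⟩ := h
  rcases hdiag q with ⟨k, -, hk⟩ | hnull
  · exact ⟨k + t, ht.trans (Nat.le_add_left t k), c, hc, pow_add_apply_pos hM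
      ((hk ⟨j, hj⟩ ⟨r, hr⟩).trans_le (diagBlock_pow_apply_le hM q k _ _)) hpos⟩
  · obtain ⟨rfl, -⟩ := hnull j r hj hr
    exact ⟨t, ht, c, hc, hpos⟩

lemma succ_of_apply_pos_of_eq {p : Fin m} {i j : Fin n} (hij : 0 < M i j) (hj : b j = p)
    (hi : b i ≠ p) : Succ M b p (b i) :=
  ⟨Ne.symm hi, 1, le_rfl, i, j, rfl, hj, by rwa [pow_one]⟩

lemma succ_of_apply_pos (hM : ∀ i j, 0 ≤ M i j) (hlow : ∀ i j, b i < b j → M i j = 0)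
    (hdiag : ∀ q : Fin m, _root_.IsPrimitive (diagBlock M b q) ∨
      (∀ i j, b i = q → b j = q → i = j ∧ M i j = 0))
    {p : Fin m} {i j : Fin n} (hij : 0 < M i j) (hj : Succ M b p (b j)) : Succ M b p (b i) := by
  obtain ⟨t, -, c, hc, hpos⟩ := hj.exists_pow_apply_pos hM hdiag rfl
  have hpi : p < b i := (hj.lt hlow).trans_le (not_lt.1 fun h => hij.ne' (hlow i j h))
  exact ⟨hpi.ne, 1 + t, by omega, i, c, rfl, hc, pow_add_apply_pos hM (by rwa [pow_one]) hpos⟩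

lemma mulVec_apply_eq_sum_block (hlow : ∀ i j, b i < b j → M i j = 0) {p : Fin m}
    {x : Fin n → ℝ} (hx : ∀ j, x j ≠ 0 → b j = p ∨ Succ M b p (b j)) {i : Fin n} (hi : b i = p) :
    (M *ᵥ x) i = ∑ j ∈ univ.filter (fun j => b j = p), M i j * x j :=
  (sum_filter_of_ne (s := univ) fun j _ hj => (hx j (right_ne_zero_of_mul hj)).resolve_right
    fun hs => left_ne_zero_of_mul hj (hlow i j (hi ▸ hs.lt hlow))).symm

lemma exists_block_eigenvector
    (hdiag : ∀ q : Fin m, _root_.IsPrimitive (diagBlock M b q) ∨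
      (∀ i j, b i = q → b j = q → i = j ∧ M i j = 0)) (q : Fin m) :
    ∃ (ρ : ℝ) (u : Fin n → ℝ), 0 ≤ u ∧ (∀ i, 0 < u i ↔ b i = q) ∧
      ∀ i, b i = q → ∑ j ∈ univ.filter (fun j => b j = q), M i j * u j = ρ * u i := by
  rcases hdiag q with hprim | hnull
  · obtain ⟨ρ, u, hu, hAu⟩ := exists_pos_eigenvector_of_primitive hprim
    set v : Fin n → ℝ := fun i => if h : b i = q then u ⟨i, h⟩ else 0
    have hvu : (fun s : {i // b i = q} => v s) = u := funext fun s => dif_pos s.2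
    refine ⟨ρ, v, fun i => ?_, fun i => ?_, fun i hi => ?_⟩
    · by_cases h : b i = q <;> simp [v, h, (hu _).le]
    · by_cases h : b i = q <;> simp [v, h, hu]
    · rw [← diagBlock_mulVec_apply v i hi, hvu, hAu]
      simp [v, hi]
  · refine ⟨0, fun i => if b i = q then 1 else 0, fun i => ?_, fun i => ?_, fun i hi => ?_⟩
    · by_cases h : b i = q <;> simp [h]
    · by_cases h : b i = q <;> simp [h]
    · rw [zero_mul]
      exact sum_eq_zero fun j hj => by rw [(hnull i j hi (mem_filter.1 hj).2).2, zero_mul]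

end Blocks

section Principal

variable {n m : ℕ} {M : Matrix (Fin n) (Fin n) ℝ} {b : Fin n → Fin m}

lemma exists_diagBlock_subinvariant_of_principal
    (hdiag : ∀ q : Fin m, _root_.IsPrimitive (diagBlock M b q) ∨
      (∀ i j, b i = q → b j = q → i = j ∧ M i j = 0))
    {p : Fin m} {lam : ℝ} (hlam : 0 < lam)
    (hprincipal : ∀ q, Succ M b p q → ∀ (μ : ℝ) (u : Fin n → ℝ), u ≠ 0 →
      (∀ i, 0 ≤ u i) → (∀ i, u i ≠ 0 → b i = q) →
      (∀ i, b i = q → (∑ j ∈ Finset.univ.filter (fun j => b j = q), M i j * u j) = μ * u i) →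
      μ < lam) :
    ∃ (u : Fin n → ℝ) (ρ : ℝ), 0 ≤ u ∧ (∀ i, 0 < u i ↔ Succ M b p (b i)) ∧ 0 ≤ ρ ∧
      ρ < lam ∧ ∀ i, ∑ j ∈ univ.filter (fun j => b j = b i), M i j * u j ≤ ρ * u i := by
  classical
  choose ρq uq huq hpos heig using exists_block_eigenvector hdiag
  have hlt : ∀ q, Succ M b p q → ρq q < lam := fun q hq => by
    obtain ⟨-, -, -, r, -, hr, -, -⟩ := id hq
    refine hprincipal q hq _ _ (fun h => ?_) (huq q)
      (fun i hi => (hpos q i).1 ((huq q i).lt_of_ne' hi)) (heig q)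
    simpa [h] using (hpos q r).2 hr
  obtain ⟨ρ, hρ, hρlam, hρq⟩ : ∃ ρ, 0 ≤ ρ ∧ ρ < lam ∧ ∀ q, Succ M b p q → ρq q ≤ ρ := by
    set f := fun q => if Succ M b p q then ρq q else 0
    refine ⟨univ.sup' ⟨p, mem_univ p⟩ f, le_sup'_of_le f (mem_univ p) (by simp [f, Succ]),
      (sup'_lt_iff _).2 fun q _ => ?_, fun q hq => le_sup'_of_le f (mem_univ q) (by simp [f, hq])⟩
    by_cases hq : Succ M b p q <;> simp [f, hq, hlt, hlam]
  set u : Fin n → ℝ := fun i => if Succ M b p (b i) then uq (b i) i else 0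
  have hu : 0 ≤ u := fun i => by
    dsimp only [u]
    split_ifs
    exacts [huq _ i, le_rfl]
  refine ⟨u, ρ, hu, fun i => ?_, hρ, hρlam, fun i => ?_⟩
  · by_cases h : Succ M b p (b i) <;> simp [u, h, (hpos _ i).2]
  by_cases h : Succ M b p (b i)
  · calc ∑ j ∈ univ.filter (fun j => b j = b i), M i j * u j
        = ∑ j ∈ univ.filter (fun j => b j = b i), M i j * uq (b i) j :=
          sum_congr rfl fun j hj => by simp [u, (mem_filter.1 hj).2, h]
      _ = ρq (b i) * u i := by simp [heig (b i) i rfl, u, h]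
      _ ≤ ρ * u i := mul_le_mul_of_nonneg_right (hρq _ h) (hu i)
  · rw [show u i = 0 from if_neg h, mul_zero]
    exact (sum_eq_zero fun j hj => by simp [u, (mem_filter.1 hj).2, h]).le

lemma exists_subinvariant_of_principal (hM : ∀ i j, 0 ≤ M i j)
    (hlow : ∀ i j, b i < b j → M i j = 0)
    (hdiag : ∀ q : Fin m, _root_.IsPrimitive (diagBlock M b q) ∨
      (∀ i j, b i = q → b j = q → i = j ∧ M i j = 0))
    {p : Fin m} {lam : ℝ} (hlam : 0 < lam)
    (hprincipal : ∀ q, Succ M b p q → ∀ (μ : ℝ) (u : Fin n → ℝ), u ≠ 0 →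
      (∀ i, 0 ≤ u i) → (∀ i, u i ≠ 0 → b i = q) →
      (∀ i, b i = q → (∑ j ∈ Finset.univ.filter (fun j => b j = q), M i j * u j) = μ * u i) →
      μ < lam) :
    ∃ (X : Fin n → ℝ) (ρ : ℝ), 0 ≤ X ∧ (∀ i, 0 < X i ↔ Succ M b p (b i)) ∧ 0 ≤ ρ ∧
      ρ < lam ∧ M *ᵥ X ≤ ρ • X := by
  obtain ⟨u, ρ, hu, hupos, hρ, hρlam, hdiagu⟩ :=
    exists_diagBlock_subinvariant_of_principal hdiag hlam hprincipal
  have hMu : ∀ i, (M *ᵥ u) i ≠ 0 → 0 < u i := fun i hi => by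
    obtain ⟨j, -, hj⟩ := exists_ne_zero_of_sum_ne_zero (s := univ)
      (f := fun j => M i j * u j) hi
    have hj' := (hupos j).1 ((hu j).lt_of_ne' (right_ne_zero_of_mul hj))
    exact (hupos i).2
      (succ_of_apply_pos hM hlow hdiag ((hM i j).lt_of_ne' (left_ne_zero_of_mul hj)) hj')
  obtain ⟨E, hE, hMX⟩ := exists_mulVec_le_of_blockTriangular hM (fun i => (b i : ℕ))
    (fun i j h => hlow i j h) hu hMu (half_pos (sub_pos.2 hρlam)) (by simpa only [Fin.val_inj])
  exact ⟨_, _, fun i => mul_nonneg (pow_nonneg hE.le _) (hu i),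
    fun i => (mul_pos_iff_of_pos_left (pow_pos hE _)).trans (hupos i), by linarith, by linarith,
    hMX⟩

lemma exists_eigenvector_of_principal (hM : ∀ i j, 0 ≤ M i j)
    (hlow : ∀ i j, b i < b j → M i j = 0) {p : Fin m} {ρ lam : ℝ} {X : Fin n → ℝ} (hX : 0 ≤ X)
    (hXD : ∀ i, 0 < X i ↔ Succ M b p (b i)) (hρ : 0 ≤ ρ) (hρlam : ρ < lam)
    (hMX : M *ᵥ X ≤ ρ • X) {vPF : Fin n → ℝ} (hvPF : 0 ≤ vPF) (hsupp : ∀ i, vPF i ≠ 0 → b i = p)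
    (heig : ∀ i, b i = p →
      ∑ j ∈ univ.filter (fun j => b j = p), M i j * vPF j = lam * vPF i) :
    ∃ w : Fin n → ℝ, 0 ≤ w ∧ (∀ i, w i ≠ 0 → Succ M b p (b i)) ∧
      M *ᵥ (vPF + w) = lam • (vPF + w) := by
  set r := M *ᵥ vPF - lam • vPF
  have hrP : ∀ i, b i = p → r i = 0 := fun i hi => by
    simp [r, mulVec_apply_eq_sum_block hlow (fun j hj => .inl (hsupp j hj)) hi, heig i hi]
  have hvPF0 : ∀ i, b i ≠ p → vPF i = 0 := fun i hi => not_imp_comm.1 (hsupp i) hi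
  have hr : 0 ≤ r := fun i => by
    by_cases hi : b i = p
    · simp [hrP i hi]
    · simpa [r, hvPF0 i hi] using mulVec_nonneg_of_nonneg hM hvPF i
  have hrX : ∀ i, r i ≠ 0 → 0 < X i := fun i hri => by
    have hi : b i ≠ p := fun hi => hri (hrP i hi)
    have hMi : (M *ᵥ vPF) i ≠ 0 := by simpa [r, hvPF0 i hi] using hri
    obtain ⟨j, -, hj⟩ := exists_ne_zero_of_sum_ne_zero (s := univ)
      (f := fun j => M i j * vPF j) hMi
    exact (hXD i).2 (succ_of_apply_pos_of_eq ((hM i j).lt_of_ne' (left_ne_zero_of_mul hj))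
      (hsupp j (right_ne_zero_of_mul hj)) hi)
  obtain ⟨w, hw, hwX, hMw⟩ := exists_nonneg_mulVec_eq_sub hM hX hρ hρlam hMX hr hrX
  refine ⟨w, hw, fun i hi => (hXD i).1 (hwX i hi), ?_⟩
  rw [mulVec_add, hMw, smul_add]
  simp only [r]
  abel

lemma eq_smul_of_eigenvector_of_principal (hM : ∀ i j, 0 ≤ M i j)
    (hlow : ∀ i j, b i < b j → M i j = 0) {p : Fin m} (hp : _root_.IsPrimitive (diagBlock M b p))
    {ρ lam : ℝ} {X : Fin n → ℝ} (hX : 0 ≤ X) (hXD : ∀ i, Succ M b p (b i) → 0 < X i)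
    (hρ : 0 ≤ ρ) (hρlam : ρ < lam) (hMX : M *ᵥ X ≤ ρ • X) {v : Fin n → ℝ}
    (hv : M *ᵥ v = lam • v) (hvP : ∀ i, b i = p → 0 < v i)
    (hvD : ∀ i, v i ≠ 0 → b i = p ∨ Succ M b p (b i)) {u : Fin n → ℝ} {μ : ℝ} (hu : 0 ≤ u)
    (huD : ∀ i, u i ≠ 0 → b i = p ∨ Succ M b p (b i)) (hMu : M *ᵥ u = μ • u) {i₀ : Fin n}
    (hi₀ : b i₀ = p) (hui₀ : u i₀ ≠ 0) :
    ∃ c : ℝ, 0 < c ∧ u = c • v := by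
  have hblock : ∀ {x : Fin n → ℝ} {μ : ℝ}, (∀ i, x i ≠ 0 → b i = p ∨ Succ M b p (b i)) →
      M *ᵥ x = μ • x → (diagBlock M b p *ᵥ fun s => x s) = μ • fun s : {i // b i = p} => x s :=
    fun hx hMx => diagBlock_mulVec_eq_smul fun i hi => by
      rw [← mulVec_apply_eq_sum_block hlow hx hi, hMx]
      rfl
  obtain ⟨rfl, c, hc, hcu⟩ := eq_smul_of_nonneg_eigenvector (A := diagBlock M b p)
    (fun s t => hM s t) hp (fun s => hvP s s.2) (hblock hvD hv) (fun s => hu s)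
    (fun h => hui₀ (congrFun h ⟨i₀, hi₀⟩)) (hblock huD hMu)
  refine ⟨c, hc, sub_eq_zero.1 (eq_zero_of_mulVec_eq_smul_of_subinvariant hM hX hρ hρlam hMX
    (by rw [mulVec_sub, mulVec_smul, hMu, hv, smul_comm, smul_sub]) fun i hi => hXD i ?_)⟩
  by_cases hip : b i = p
  · have : u i = c * v i := by simpa using congrFun hcu ⟨i, hip⟩
    simp [this] at hi
  · have : u i ≠ 0 ∨ v i ≠ 0 := by
      by_contra! h
      simp [h] at hi
    exact this.elim (fun h => (huD i h).resolve_left hip) fun h => (hvD i h).resolve_left hip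

end Principal

theorem statement10_general {n m : ℕ} (M : Matrix (Fin n) (Fin n) ℝ)
    (hZ : ∀ i j, ∃ z : ℕ, M i j = (z : ℝ))
    (b : Fin n → Fin m)
    (hlow : ∀ i j, b i < b j → M i j = 0)
    (hdiag : ∀ p' : Fin m, _root_.IsPrimitive (diagBlock M b p') ∨
      (∀ i j, b i = p' → b j = p' → i = j ∧ M i j = 0))
    (p : Fin m) (hp : _root_.IsPrimitive (diagBlock M b p))
    (lam : ℝ) (vPF : Fin n → ℝ)
    (hsupp : ∀ i, vPF i ≠ 0 → b i = p)
    (hposPF : ∀ i, b i = p → 0 < vPF i)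
    (hnorm : ∑ i, |vPF i| = 1)
    (heig : ∀ i, b i = p →
      (∑ j ∈ Finset.univ.filter (fun j => b j = p), M i j * vPF j) = lam * vPF i)
    (hprincipal : ∀ q, Succ M b p q → ∀ (μ : ℝ) (u : Fin n → ℝ), u ≠ 0 →
      (∀ i, 0 ≤ u i) → (∀ i, u i ≠ 0 → b i = q) →
      (∀ i, b i = q → (∑ j ∈ Finset.univ.filter (fun j => b j = q), M i j * u j) = μ * u i) →
      μ < lam) :
    ∃ v : Fin n → ℝ, (∀ i, 0 ≤ v i) ∧ M.mulVec v = lam • v ∧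
      (∃ w : Fin n → ℝ, (∀ i, 0 ≤ w i) ∧ (∀ i, w i ≠ 0 → Succ M b p (b i)) ∧ v = vPF + w) ∧
      ∀ (u : Fin n → ℝ) (μ : ℝ), u ≠ 0 → (∀ i, 0 ≤ u i) →
        (∀ i, u i ≠ 0 → b i = p ∨ Succ M b p (b i)) → M.mulVec u = μ • u →
        (∀ i, u i ≠ 0 → Succ M b p (b i)) ∨ ∃ c : ℝ, 0 < c ∧ u = c • v := by
  have hM : ∀ i j, 0 ≤ M i j := fun i j => by
    obtain ⟨z, hz⟩ := hZ i j
    exact hz ▸ z.cast_nonneg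
  have hvPF : 0 ≤ vPF := fun i => by
    by_cases h : vPF i = 0
    exacts [h.ge, (hposPF i (hsupp i h)).le]
  obtain ⟨i₀, hi₀⟩ : ∃ i, vPF i ≠ 0 := by
    by_contra! h
    simp [h] at hnorm
  have hlam : 0 < lam := eigenvalue_pos_of_primitive (A := diagBlock M b p)
    (fun s t => hM s t) hp (fun s => hvPF s)
    (fun h => hi₀ (congrFun h ⟨i₀, hsupp i₀ hi₀⟩)) (diagBlock_mulVec_eq_smul heig)
  obtain ⟨X, ρ, hX, hXD, hρ, hρlam, hMX⟩ :=
    exists_subinvariant_of_principal hM hlow hdiag hlam hprincipal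
  obtain ⟨w, hw, hwD, hv⟩ :=
    exists_eigenvector_of_principal hM hlow hX hXD hρ hρlam hMX hvPF hsupp heig
  refine ⟨vPF + w, add_nonneg hvPF hw, hv, ⟨w, hw, hwD, rfl⟩,
    fun u μ _ hu huD hMu => or_iff_not_imp_left.2 fun hCu => ?_⟩
  push Not at hCu
  obtain ⟨i, hui, hi⟩ := hCu
  exact eq_smul_of_eigenvector_of_principal hM hlow hp hX (fun i => (hXD i).2) hρ hρlam hMX hv
    (fun i hi => add_pos_of_pos_of_nonneg (hposPF i hi) (hw i))
    (fun i hi => (ne_or_eq (vPF i) 0).imp (hsupp i) fun h => hwD i (by simpa [h] using hi))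
    hu huD hMu ((huD i hui).resolve_right hi) hui

/-- Principal eigenvector lemma: a principal block `p` (primitive diagonal block with
extended PF-eigenvector `vPF` and PF-eigenvalue `lam` strictly exceeding the
PF-eigenvalues of all blocks in its dependency block union) determines an eigenvector
`v = vPF + w` of `M` with eigenvalue `lam`, `w` supported on the dependency block
union; and every eigenvector of `M` in the cone of `B_p ∪ C(B_p)` is either supported
on `C(B_p)` or a positive multiple of `v`. -/
theorem statement10 {n m : ℕ} (M : Matrix (Fin n) (Fin n) ℝ)
    (hZ : ∀ i j, ∃ z : ℕ, M i j = (z : ℝ))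
    (b : Fin n → Fin m)
    (hlow : ∀ i j, b i < b j → M i j = 0)
    (hdiag : ∀ p' : Fin m, _root_.IsPrimitive (diagBlock M b p') ∨
      (∀ i j, b i = p' → b j = p' → i = j ∧ M i j = 0))
    (hcol : ∀ j, ∃ i, 0 < M i j)
    (p : Fin m) (hp : _root_.IsPrimitive (diagBlock M b p))
    (lam : ℝ) (vPF : Fin n → ℝ)
    (hsupp : ∀ i, vPF i ≠ 0 → b i = p)
    (hposPF : ∀ i, b i = p → 0 < vPF i)
    (hnorm : ∑ i, |vPF i| = 1)
    (heig : ∀ i, b i = p →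
      (∑ j ∈ Finset.univ.filter (fun j => b j = p), M i j * vPF j) = lam * vPF i)
    (hprincipal : ∀ q, Succ M b p q → ∀ (μ : ℝ) (u : Fin n → ℝ), u ≠ 0 →
      (∀ i, 0 ≤ u i) → (∀ i, u i ≠ 0 → b i = q) →
      (∀ i, b i = q → (∑ j ∈ Finset.univ.filter (fun j => b j = q), M i j * u j) = μ * u i) →
      μ < lam) :
    ∃ v : Fin n → ℝ, (∀ i, 0 ≤ v i) ∧ M.mulVec v = lam • v ∧
      (∃ w : Fin n → ℝ, (∀ i, 0 ≤ w i) ∧ (∀ i, w i ≠ 0 → Succ M b p (b i)) ∧ v = vPF + w) ∧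
      ∀ (u : Fin n → ℝ) (μ : ℝ), u ≠ 0 → (∀ i, 0 ≤ u i) →
        (∀ i, u i ≠ 0 → b i = p ∨ Succ M b p (b i)) → M.mulVec u = μ • u →
        (∀ i, u i ≠ 0 → Succ M b p (b i)) ∨ ∃ c : ℝ, 0 < c ∧ u = c • v :=
  statement10_general M hZ b hlow hdiag p hp lam vPF hsupp hposPF hnorm heig hprincipal
end
end

section
/- Let M be a non-negative integer square matrix in primitive Frobenius form with no zero columns. A non-negative vector v is an eigenvector of M with eigenvalue λ ≥ 1 if and only if v is a nonzero element of the non-negative cone spanned by the principal eigenvectors of M with eigenvalue λ. -/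
open Filter Matrix

noncomputable section

/-- `μ` is an eigenvalue of the diagonal block `q` of `M` admitting a non-negative
nonzero eigenvector supported on the block `q`.  For a primitive diagonal block this
characterizes the Perron-Frobenius eigenvalue. -/
def blockEig {n m : ℕ} (M : Matrix (Fin n) (Fin n) ℝ) (b : Fin n → Fin m)
    (q : Fin m) (μ : ℝ) : Prop :=
  ∃ u : Fin n → ℝ, u ≠ 0 ∧ (∀ i, 0 ≤ u i) ∧ (∀ i, u i ≠ 0 → b i = q) ∧
    ∀ i, b i = q → (∑ j ∈ Finset.univ.filter (fun j => b j = q), M i j * u j) = μ * u i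

/-- A block `p` is principal: its diagonal block is primitive and its PF-eigenvalue
strictly exceeds the PF-eigenvalue of every block in its dependency block union. -/
def IsPrincipalBlock {n m : ℕ} (M : Matrix (Fin n) (Fin n) ℝ) (b : Fin n → Fin m)
    (p : Fin m) : Prop :=
  _root_.IsPrimitive (diagBlock M b p) ∧
    ∀ q, Succ M b p q → ∀ μ μ' : ℝ, blockEig M b q μ → blockEig M b p μ' → μ < μ'

/-- `v` is the principal eigenvector (with eigenvalue `lam`) associated to some
principal block `p`: the extended PF-eigenvector of the block `p` (normalized so that
its block-`p` part has ℓ¹-norm 1) plus a correction supported on the dependency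
block union `C(B_p)`. -/
def IsPrincipalEV {n m : ℕ} (M : Matrix (Fin n) (Fin n) ℝ) (b : Fin n → Fin m)
    (lam : ℝ) (v : Fin n → ℝ) : Prop :=
  ∃ p : Fin m, IsPrincipalBlock M b p ∧ blockEig M b p lam ∧
    (∀ i, 0 ≤ v i) ∧ (∀ i, b i = p → 0 < v i) ∧
    (∀ i, v i ≠ 0 → b i = p ∨ Succ M b p (b i)) ∧
    (∑ i ∈ Finset.univ.filter (fun i => b i = p), v i) = 1 ∧
    M.mulVec v = lam • v

/-!
Induction on the support of `v`. Let `p` be the lowest block on which `v` does not vanish. By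
lower triangularity, the restriction of `v` to `p` is a Perron vector of the diagonal block `p`
with eigenvalue `lam > 0`, so that block is primitive, and the increasing limit of
`lam⁻ᵗ • Mᵗ` applied to it is an eigenvector `w ≤ v` of `M` that agrees with `v` on `p` and is
supported on `p` and the blocks depending on `p`. The block `p` is principal: every primitive
block `q` depending on `p` receives positive inflow from `w`, and comparing `w` with a Perron
vector of `q` (the Collatz–Wielandt touching argument) forces the Perron root of `q` below `lam`.
Subtracting the normalized `w` from `v` kills block `p` and leaves a non-negative eigenvector
with smaller support.
-/

section NonnegMatrix
variable {ι : Type*} {A B : Matrix ι ι ℝ} {u v w : ι → ℝ}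

lemma exists_smul_le_apply_eq {S : Finset ι} (hS : S.Nonempty) (hu : ∀ i ∈ S, 0 < u i)
    (hu0 : ∀ i ∉ S, u i = 0) (hw : 0 ≤ w) : ∃ s : ℝ, ∃ i ∈ S, s • u ≤ w ∧ w i = s * u i := by
  obtain ⟨i, hi, hmin⟩ := S.exists_min_image (fun j => w j / u j) hS
  refine ⟨w i / u i, i, hi, fun j => ?_, (div_mul_cancel₀ _ (hu i hi).ne').symm⟩
  by_cases hj : j ∈ S
  · simpa only [Pi.smul_apply, smul_eq_mul, ← le_div_iff₀ (hu j hj)] using hmin j hj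
  · simpa [hu0 j hj] using hw j

variable [Fintype ι]

lemma mulVec_mono_of_nonneg_s11 (hA : ∀ i j, 0 ≤ A i j) (h : u ≤ v) : A *ᵥ u ≤ A *ᵥ v :=
  fun i => Finset.sum_le_sum fun j _ => mul_le_mul_of_nonneg_left (h j) (hA i j)

lemma mulVec_nonneg_of_nonneg_s11 (hA : ∀ i j, 0 ≤ A i j) (hv : 0 ≤ v) : 0 ≤ A *ᵥ v := by
  simpa using mulVec_mono_of_nonneg_s11 hA hv

lemma mulVec_mono_left (hAB : ∀ i j, A i j ≤ B i j) (hv : 0 ≤ v) : A *ᵥ v ≤ B *ᵥ v :=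
  fun i => Finset.sum_le_sum fun j _ => mul_le_mul_of_nonneg_right (hAB i j) (hv j)

lemma mul_le_mulVec_apply (hA : ∀ i j, 0 ≤ A i j) (hv : 0 ≤ v) (i j : ι) :
    A i j * v j ≤ (A *ᵥ v) i :=
  Finset.single_le_sum (f := fun k => A i k * v k) (fun k _ => mul_nonneg (hA i k) (hv k))
    (Finset.mem_univ j)

lemma mulVec_apply_lt_of_lt (hA : ∀ i j, 0 ≤ A i j) (h : u ≤ v) {i j : ι} (hj : u j < v j)
    (hij : 0 < A i j) : (A *ᵥ u) i < (A *ᵥ v) i :=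
  Finset.sum_lt_sum (fun k _ => mul_le_mul_of_nonneg_left (h k) (hA i k))
    ⟨j, Finset.mem_univ j, mul_lt_mul_of_pos_left hj hij⟩

lemma mulVec_apply_lt_of_apply_lt (hAB : ∀ i j, A i j ≤ B i j) (hv : 0 ≤ v) {i j : ι}
    (hij : A i j < B i j) (hj : 0 < v j) : (A *ᵥ v) i < (B *ᵥ v) i :=
  Finset.sum_lt_sum (fun k _ => mul_le_mul_of_nonneg_right (hAB i k) (hv k))
    ⟨j, Finset.mem_univ j, mul_lt_mul_of_pos_right hij hj⟩

lemma mul_apply_le_mulVec_of_smul_le (hA : ∀ i j, 0 ≤ A i j) {α s : ℝ} (hu : A *ᵥ u = α • u)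
    (hsu : s • u ≤ w) {i : ι} (hi : w i = s * u i) : α * w i ≤ (A *ᵥ w) i :=
  calc α * w i = (A *ᵥ (s • u)) i := by
        rw [mulVec_smul, hu, hi]; simp only [Pi.smul_apply, smul_eq_mul]; ring
    _ ≤ (A *ᵥ w) i := mulVec_mono_of_nonneg_s11 hA hsu i

variable [DecidableEq ι]

lemma pow_apply_mono (hA : ∀ i j, 0 ≤ A i j) (hAB : ∀ i j, A i j ≤ B i j) (t : ℕ) (i j : ι) :
    (A ^ t) i j ≤ (B ^ t) i j := by
  induction t generalizing j with
  | zero => rfl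
  | succ t ih =>
    rw [pow_succ, pow_succ, mul_apply, mul_apply]
    exact Finset.sum_le_sum fun l _ =>
      mul_le_mul (ih l) (hAB l j) (hA l j) ((pow_apply_nonneg hA t i l).trans (ih l))

lemma pow_mulVec_eq_of_mulVec_eq {μ : ℝ} (h : A *ᵥ v = μ • v) (t : ℕ) :
    (A ^ t) *ᵥ v = μ ^ t • v := by
  induction t with
  | zero => simp
  | succ t ih => rw [pow_succ', ← mulVec_mulVec, ih, mulVec_smul, h, smul_smul, pow_succ]

/-- The eigenvector `w` is the limit of the increasing sequence `lam⁻ᵗ • Aᵗ *ᵥ x`. -/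
lemma exists_mulVec_eq_between (hA : ∀ i j, 0 ≤ A i j) {lam : ℝ} (hlam : 0 < lam)
    {x y : ι → ℝ} (hxA : lam • x ≤ A *ᵥ x) (hxy : x ≤ y) (hy : A *ᵥ y = lam • y) :
    ∃ w, A *ᵥ w = lam • w ∧ x ≤ w ∧ w ≤ y ∧ ∀ i, w i ≠ 0 → ∃ t, (A ^ t *ᵥ x) i ≠ 0 := by
  set W : ℕ → ι → ℝ := fun t => (lam ^ t)⁻¹ • (A ^ t *ᵥ x) with hW
  have hAW : ∀ t, A *ᵥ W t = lam • W (t + 1) := fun t => by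
    simp only [hW, mulVec_smul, mulVec_mulVec, ← pow_succ', smul_smul]
    congr 1
    field_simp
    ring
  have hmono : Monotone W := monotone_nat_of_le_succ fun t =>
    calc W t = (lam ^ (t + 1))⁻¹ • (A ^ t *ᵥ (lam • x)) := by
          simp only [hW, mulVec_smul, smul_smul]
          congr 1
          field_simp
          ring
      _ ≤ (lam ^ (t + 1))⁻¹ • (A ^ t *ᵥ (A *ᵥ x)) :=
          smul_le_smul_of_nonneg_left (mulVec_mono_of_nonneg_s11 (pow_apply_nonneg hA t) hxA)
            (by positivity)
      _ = W (t + 1) := by rw [mulVec_mulVec, ← pow_succ]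
  have hWy : ∀ t, W t ≤ y := fun t =>
    calc W t ≤ (lam ^ t)⁻¹ • (A ^ t *ᵥ y) :=
          smul_le_smul_of_nonneg_left (mulVec_mono_of_nonneg_s11 (pow_apply_nonneg hA t) hxy)
            (by positivity)
      _ = y := by rw [pow_mulVec_eq_of_mulVec_eq hy, inv_smul_smul₀ (pow_pos hlam t).ne']
  have hbdd : BddAbove (Set.range W) := ⟨y, by rintro _ ⟨t, rfl⟩; exact hWy t⟩
  have hlim : Tendsto W atTop (nhds (⨆ t, W t)) := tendsto_atTop_ciSup hmono hbdd
  refine ⟨⨆ t, W t, tendsto_nhds_unique (f := fun t => A *ᵥ W t) (l := atTop) ?_ ?_, ?_,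
    ciSup_le hWy, fun i hi => ?_⟩
  · exact ((continuous_const.matrix_mulVec continuous_id).tendsto _).comp hlim
  · simpa only [Function.comp_def, hAW] using
      ((hlim.comp (tendsto_add_atTop_nat 1)).const_smul lam)
  · exact le_trans (by simp [hW]) (le_ciSup hbdd 0)
  · by_contra! h
    refine hi (tendsto_nhds_unique ((continuous_apply i).tendsto _ |>.comp hlim) ?_)
    simp [Function.comp_def, hW, h]

end NonnegMatrix

section Block
variable {ι : Type*} {m : ℕ}

/-- `diagBlock M b q` extended by zero to all of `ι`, so that it acts on the same vectors as `M`. -/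
def blockMask (M : Matrix ι ι ℝ) (b : ι → Fin m) (q : Fin m) : Matrix ι ι ℝ :=
  of fun i j => if b i = q ∧ b j = q then M i j else 0

variable {M : Matrix ι ι ℝ} {b : ι → Fin m} {q : Fin m}

lemma blockMask_apply (i j : ι) :
    blockMask M b q i j = if b i = q ∧ b j = q then M i j else 0 := rfl

lemma blockMask_nonneg (hM : ∀ i j, 0 ≤ M i j) (b : ι → Fin m) (q : Fin m) (i j : ι) :
    0 ≤ blockMask M b q i j := by
  rw [blockMask_apply]; split_ifs <;> simp [hM i j]

lemma blockMask_le (hM : ∀ i j, 0 ≤ M i j) (b : ι → Fin m) (q : Fin m) (i j : ι) :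
    blockMask M b q i j ≤ M i j := by
  rw [blockMask_apply]; split_ifs <;> simp [hM i j]

variable [Fintype ι]

lemma blockMask_mulVec_apply (u : ι → ℝ) (i : ι) :
    (blockMask M b q *ᵥ u) i =
      if b i = q then ∑ j ∈ Finset.univ.filter (fun j => b j = q), M i j * u j else 0 := by
  by_cases hi : b i = q <;> simp [blockMask, mulVec, dotProduct, hi, Finset.sum_filter]

variable [DecidableEq ι]

lemma pow_blockMask_apply_of_ne {t : ℕ} (ht : 0 < t) {j : ι} (hj : b j ≠ q) (i : ι) :
    (blockMask M b q ^ t) i j = 0 := by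
  obtain ⟨t, rfl⟩ := Nat.exists_eq_add_of_lt ht
  rw [pow_succ, mul_apply]
  exact Finset.sum_eq_zero fun l _ => by simp [blockMask, hj]

lemma pow_blockMask_apply (t : ℕ) {i j : ι} (hi : b i = q) (hj : b j = q) :
    (blockMask M b q ^ t) i j = (diagBlock M b q ^ t) ⟨i, hi⟩ ⟨j, hj⟩ := by
  induction t generalizing j with
  | zero => simp [one_apply, Subtype.ext_iff]
  | succ t ih =>
    rw [pow_succ, pow_succ, mul_apply, mul_apply,
      ← Fintype.sum_subtype_add_sum_subtype (fun l => b l = q),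
      Fintype.sum_eq_zero (fun l : {l // ¬ b l = q} => _) fun l => by simp [blockMask, l.2],
      add_zero]
    exact Fintype.sum_congr _ _ fun l => by rw [ih l.2]; simp [blockMask, diagBlock, l.2, hj]

lemma IsPrimitive.exists_pow_blockMask_pos (h : _root_.IsPrimitive (diagBlock M b q)) :
    ∃ k, 0 < k ∧ ∀ i j, b i = q → b j = q → 0 < (blockMask M b q ^ k) i j := by
  obtain ⟨k, hk, hpos⟩ := h
  exact ⟨k, hk, fun i j hi hj => (pow_blockMask_apply k hi hj).symm ▸ hpos _ _⟩

end Block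

section BlockEigenvector
variable {ι : Type*} [Fintype ι] {m : ℕ}

structure IsBlockEigenvector (M : Matrix ι ι ℝ) (b : ι → Fin m) (q : Fin m) (μ : ℝ)
    (u : ι → ℝ) : Prop where
  ne_zero : u ≠ 0
  nonneg : 0 ≤ u
  support_subset : ∀ i, u i ≠ 0 → b i = q
  mulVec_eq : blockMask M b q *ᵥ u = μ • u

lemma blockEig_iff {n : ℕ} {M : Matrix (Fin n) (Fin n) ℝ} {b : Fin n → Fin m} {q : Fin m}
    {μ : ℝ} : blockEig M b q μ ↔ ∃ u, IsBlockEigenvector M b q μ u := by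
  refine ⟨fun ⟨u, hu, hu0, hsupp, heq⟩ => ⟨u, hu, hu0, hsupp, ?_⟩,
    fun ⟨u, hu⟩ => ⟨u, hu.ne_zero, hu.nonneg, hu.support_subset, fun i hi => ?_⟩⟩
  · funext i
    rw [blockMask_mulVec_apply]
    split_ifs with hi
    · simp [heq i hi]
    · simp [not_imp_comm.1 (hsupp i) hi]
  · simpa [blockMask_mulVec_apply, hi] using congrFun hu.mulVec_eq i

namespace IsBlockEigenvector
variable {M : Matrix ι ι ℝ} {b : ι → Fin m} {q : Fin m} {α β μ : ℝ} {u w : ι → ℝ}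

lemma eq_zero_of_null (hu : IsBlockEigenvector M b q μ u)
    (h : ∀ i j, b i = q → b j = q → i = j ∧ M i j = 0) : μ = 0 := by
  have hzero : blockMask M b q = 0 := by
    ext i j
    rw [blockMask_apply]
    split_ifs with hij
    · exact (h i j hij.1 hij.2).2
    · rfl
  have := hu.mulVec_eq
  rw [hzero, zero_mulVec] at this
  exact (smul_eq_zero.1 this.symm).resolve_right hu.ne_zero

variable [DecidableEq ι]

lemma pos (hM : ∀ i j, 0 ≤ M i j) (hq : _root_.IsPrimitive (diagBlock M b q))
    (hu : IsBlockEigenvector M b q μ u) : 0 < μ ∧ ∀ i, b i = q → 0 < u i := by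
  obtain ⟨k, hk, hpos⟩ := hq.exists_pow_blockMask_pos
  obtain ⟨j, hj⟩ : ∃ j, u j ≠ 0 := Function.ne_iff.1 hu.ne_zero
  have hjq : b j = q := hu.support_subset j hj
  have huj : 0 < u j := lt_of_le_of_ne (hu.nonneg j) (Ne.symm hj)
  have hμk : ∀ i, b i = q → 0 < μ ^ k * u i := fun i hi =>
    calc 0 < (blockMask M b q ^ k) i j * u j := mul_pos (hpos i j hi hjq) huj
      _ ≤ (blockMask M b q ^ k *ᵥ u) i :=
        mul_le_mulVec_apply (pow_apply_nonneg (blockMask_nonneg hM b q) k) hu.nonneg i j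
      _ = μ ^ k * u i := by rw [pow_mulVec_eq_of_mulVec_eq hu.mulVec_eq]; rfl
  have hμ0 : 0 ≤ μ := by
    have := mulVec_nonneg_of_nonneg_s11 (blockMask_nonneg hM b q) hu.nonneg j
    rw [hu.mulVec_eq] at this
    exact nonneg_of_mul_nonneg_left this huj
  have hμ : 0 < μ ^ k := pos_of_mul_pos_left (hμk j hjq) huj.le
  exact ⟨hμ0.lt_of_ne' (by rintro rfl; simp [zero_pow hk.ne'] at hμ),
    fun i hi => pos_of_mul_pos_right (hμk i hi) hμ.le⟩

lemma exists_smul_le (hM : ∀ i j, 0 ≤ M i j) (hq : _root_.IsPrimitive (diagBlock M b q))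
    (hu : IsBlockEigenvector M b q μ u) (hw : 0 ≤ w) :
    ∃ s : ℝ, ∃ i, b i = q ∧ s • u ≤ w ∧ w i = s * u i := by
  obtain ⟨j, hj⟩ : ∃ j, u j ≠ 0 := Function.ne_iff.1 hu.ne_zero
  obtain ⟨s, i, hi, hsu, hwi⟩ := exists_smul_le_apply_eq
    (S := Finset.univ.filter fun i => b i = q) ⟨j, by simp [hu.support_subset j hj]⟩
    (fun i hi => (hu.pos hM hq).2 i (Finset.mem_filter.1 hi).2)
    (fun i hi => not_imp_comm.1 (hu.support_subset i) (by simpa using hi)) hw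
  exact ⟨s, i, (Finset.mem_filter.1 hi).2, hsu, hwi⟩

lemma eigenvalue_le (hM : ∀ i j, 0 ≤ M i j) (hq : _root_.IsPrimitive (diagBlock M b q))
    (hu : IsBlockEigenvector M b q α u) (hw : IsBlockEigenvector M b q β w) : α ≤ β := by
  obtain ⟨s, i, hi, hsu, hwi⟩ := hu.exists_smul_le hM hq hw.nonneg
  have := mul_apply_le_mulVec_of_smul_le (blockMask_nonneg hM b q) hu.mulVec_eq hsu hwi
  rw [hw.mulVec_eq] at this
  exact le_of_mul_le_mul_right this ((hw.pos hM hq).2 i hi)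

lemma eigenvalue_eq (hM : ∀ i j, 0 ≤ M i j) (hq : _root_.IsPrimitive (diagBlock M b q))
    (hu : IsBlockEigenvector M b q α u) (hw : IsBlockEigenvector M b q β w) : α = β :=
  (hu.eigenvalue_le hM hq hw).antisymm (hw.eigenvalue_le hM hq hu)

lemma eigenvalue_lt_of_inflow (hM : ∀ i j, 0 ≤ M i j) (hq : _root_.IsPrimitive (diagBlock M b q))
    (hu : IsBlockEigenvector M b q μ u) {lam : ℝ} (hlam : 0 < lam) (hw0 : 0 ≤ w)
    (hw : M *ᵥ w = lam • w) {t : ℕ} (ht : 0 < t) {r c : ι} (hr : b r = q) (hc : b c ≠ q)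
    (hrc : 0 < (M ^ t) r c) (hwc : 0 < w c) : μ < lam := by
  set X := blockMask M b q
  have hX : ∀ i j, 0 ≤ X i j := blockMask_nonneg hM b q
  have hXM : ∀ t i j, (X ^ t) i j ≤ (M ^ t) i j := pow_apply_mono hX (blockMask_le hM b q)
  have hMw : ∀ t, (M ^ t *ᵥ w) = lam ^ t • w := pow_mulVec_eq_of_mulVec_eq hw
  obtain ⟨k, hk, hXk⟩ := hq.exists_pow_blockMask_pos
  have hwr : 0 < w r := by
    have := (mul_pos hrc hwc).trans_le (mul_le_mulVec_apply (pow_apply_nonneg hM t) hw0 r c)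
    rw [hMw] at this
    exact pos_of_mul_pos_right this (pow_pos hlam t).le
  have hwq : ∀ i, b i = q → 0 < w i := fun i hi => by
    have := (mul_pos (hXk i r hi hr) hwr).trans_le
      ((mul_le_mulVec_apply (pow_apply_nonneg hX k) hw0 i r).trans
        (mulVec_mono_left (hXM k) hw0 i))
    rw [hMw] at this
    exact pos_of_mul_pos_right this (pow_pos hlam k).le
  obtain ⟨s, i, hi, hsu, hwi⟩ := hu.exists_smul_le hM hq hw0
  -- the inflow makes `X ^ t *ᵥ w` strictly smaller than `M ^ t *ᵥ w` at `r`,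
  -- and `X ^ k` spreads this defect over the whole block
  have hlt : (X ^ (k + t) *ᵥ w) i < lam ^ (k + t) * w i :=
    calc (X ^ (k + t) *ᵥ w) i = (X ^ k *ᵥ (X ^ t *ᵥ w)) i := by rw [pow_add, mulVec_mulVec]
      _ < (X ^ k *ᵥ (M ^ t *ᵥ w)) i :=
        mulVec_apply_lt_of_lt (pow_apply_nonneg hX k) (mulVec_mono_left (hXM t) hw0)
          (mulVec_apply_lt_of_apply_lt (hXM t) hw0
            (by rwa [pow_blockMask_apply_of_ne ht hc]) hwc) (hXk i r hi hr)
      _ ≤ (M ^ k *ᵥ (M ^ t *ᵥ w)) i :=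
        mulVec_mono_left (hXM k) (mulVec_nonneg_of_nonneg_s11 (pow_apply_nonneg hM t) hw0) i
      _ = lam ^ (k + t) * w i := by rw [mulVec_mulVec, ← pow_add, hMw]; rfl
  have hle := mul_apply_le_mulVec_of_smul_le (pow_apply_nonneg hX (k + t))
    (pow_mulVec_eq_of_mulVec_eq hu.mulVec_eq (k + t)) hsu hwi
  exact (pow_lt_pow_iff_left₀ (hu.pos hM hq).1.le hlam.le (by omega)).1
    (lt_of_mul_lt_mul_right (hle.trans_lt hlt) (hwq i hi).le)

end IsBlockEigenvector

end BlockEigenvector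

section Principal
variable {n m : ℕ} {M : Matrix (Fin n) (Fin n) ℝ} {b : Fin n → Fin m} {lam : ℝ}

lemma IsPrincipalEV.nonneg {w : Fin n → ℝ} (hw : IsPrincipalEV M b lam w) : 0 ≤ w := by
  obtain ⟨_, _, _, hw0, _⟩ := hw
  exact hw0

lemma IsPrincipalEV.mulVec_eq {w : Fin n → ℝ} (hw : IsPrincipalEV M b lam w) :
    M *ᵥ w = lam • w := by
  obtain ⟨_, _, _, _, _, _, _, h⟩ := hw
  exact h

/-- By lower triangularity, block `p` of `M *ᵥ v` only sees block `p` of `v`. -/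
lemma isBlockEigenvector_indicator (hlow : ∀ i j, b i < b j → M i j = 0) {v : Fin n → ℝ}
    (hv0 : 0 ≤ v) (hv : M *ᵥ v = lam • v) {p : Fin m} (hmin : ∀ i, v i ≠ 0 → p ≤ b i)
    (hp : ∃ i, b i = p ∧ v i ≠ 0) :
    IsBlockEigenvector M b p lam ({i | b i = p}.indicator v) := by
  obtain ⟨i₀, hi₀, hvi₀⟩ := hp
  refine ⟨fun h => hvi₀ ?_, Set.indicator_nonneg fun i _ => hv0 i, fun i hi => ?_, ?_⟩
  · simpa [hi₀] using congrFun h i₀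
  · by_contra h
    exact hi (Set.indicator_of_notMem (s := {i | b i = p}) h v)
  funext i
  rw [blockMask_mulVec_apply]
  split_ifs with hi
  · have hrow : ∀ j, M i j * v j = if b j = p then M i j * v j else 0 := fun j => by
      split_ifs with hj
      · rfl
      · by_cases hvj : v j = 0
        · simp [hvj]
        · simp [hlow i j (hi ▸ lt_of_le_of_ne (hmin j hvj) (Ne.symm hj))]
    calc ∑ j ∈ Finset.univ.filter (fun j => b j = p), M i j * {i | b i = p}.indicator v j
        = ∑ j ∈ Finset.univ.filter (fun j => b j = p), M i j * v j :=
          Finset.sum_congr rfl fun j hj => by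
            rw [Set.indicator_of_mem (show j ∈ {i | b i = p} from (Finset.mem_filter.1 hj).2)]
      _ = (M *ᵥ v) i := by
          rw [Finset.sum_filter]
          exact Finset.sum_congr rfl fun j _ => (hrow j).symm
      _ = (lam • {i | b i = p}.indicator v) i := by
          rw [hv]; simp [Set.indicator_of_mem (show i ∈ {i | b i = p} from hi)]
  · simp [hi]

lemma succ_of_pow_mulVec_apply_ne_zero (hM : ∀ i j, 0 ≤ M i j) {p : Fin m} {x : Fin n → ℝ}
    (hx : ∀ i, x i ≠ 0 → b i = p) {t : ℕ} {i : Fin n} (h : (M ^ t *ᵥ x) i ≠ 0)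
    (hi : b i ≠ p) : Succ M b p (b i) := by
  obtain ⟨c, -, hc⟩ := Finset.exists_ne_zero_of_sum_ne_zero (s := Finset.univ)
    (f := fun j => (M ^ t) i j * x j) h
  have hcp : b c = p := hx c (right_ne_zero_of_mul hc)
  have hic : (M ^ t) i c ≠ 0 := left_ne_zero_of_mul hc
  refine ⟨fun h => hi h.symm, t, Nat.pos_of_ne_zero ?_, i, c, rfl, hcp,
    lt_of_le_of_ne (pow_apply_nonneg hM t i c) (Ne.symm hic)⟩
  rintro rfl
  obtain rfl : i = c := by simpa [one_apply] using hic
  exact hi hcp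

/-- `lam` is the Perron root of `p`, and `w` feeds mass into every block depending on `p`. -/
lemma isPrincipalBlock_of_eigenvector (hM : ∀ i j, 0 ≤ M i j)
    (hdiag : ∀ p : Fin m, _root_.IsPrimitive (diagBlock M b p) ∨
      (∀ i j, b i = p → b j = p → i = j ∧ M i j = 0))
    {p : Fin m} (hp : _root_.IsPrimitive (diagBlock M b p)) (hlam : 0 < lam) {u w : Fin n → ℝ}
    (hu : IsBlockEigenvector M b p lam u) (hw0 : 0 ≤ w) (hw : M *ᵥ w = lam • w)
    (hwp : ∀ i, b i = p → 0 < w i) : IsPrincipalBlock M b p := by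
  refine ⟨hp, fun q ⟨hpq, t, ht, r, c, hr, hc, hrc⟩ μ μ' hμ hμ' => ?_⟩
  obtain ⟨u', hu'⟩ := blockEig_iff.1 hμ'
  obtain ⟨u'', hu''⟩ := blockEig_iff.1 hμ
  rw [← hu.eigenvalue_eq hM hp hu']
  rcases hdiag q with hq | hq
  · exact hu''.eigenvalue_lt_of_inflow hM hq hlam hw0 hw ht hr (hc ▸ hpq) hrc (hwp c hc)
  · rw [hu''.eq_zero_of_null hq]
    exact hlam

lemma isPrincipalEV_inv_smul {p : Fin m} (hp : IsPrincipalBlock M b p)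
    (hlamp : blockEig M b p lam) {w : Fin n → ℝ} (hw0 : 0 ≤ w) (hw : M *ᵥ w = lam • w)
    (hwp : ∀ i, b i = p → 0 < w i) (hsupp : ∀ i, w i ≠ 0 → b i = p ∨ Succ M b p (b i)) :
    IsPrincipalEV M b lam ((∑ i ∈ Finset.univ.filter (fun i => b i = p), w i)⁻¹ • w) := by
  set c := ∑ i ∈ Finset.univ.filter (fun i => b i = p), w i
  have hc : 0 < c := by
    obtain ⟨u, hu⟩ := blockEig_iff.1 hlamp
    obtain ⟨i, hi⟩ : ∃ i, u i ≠ 0 := Function.ne_iff.1 hu.ne_zero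
    exact Finset.sum_pos (fun j hj => hwp j (Finset.mem_filter.1 hj).2)
      ⟨i, by simp [hu.support_subset i hi]⟩
  refine ⟨p, hp, hlamp, smul_nonneg (inv_nonneg.2 hc.le) hw0,
    fun i hi => mul_pos (inv_pos.2 hc) (hwp i hi), fun i hi => hsupp i (right_ne_zero_of_mul hi),
    ?_, by rw [mulVec_smul, hw, smul_comm]⟩
  simp only [Pi.smul_apply, smul_eq_mul, ← Finset.mul_sum]
  exact inv_mul_cancel₀ hc.ne'

end Principal

section Decomposition
variable {n m : ℕ} {M : Matrix (Fin n) (Fin n) ℝ} {b : Fin n → Fin m} {lam : ℝ}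

lemma exists_isPrincipalEV_smul_le (hM : ∀ i j, 0 ≤ M i j)
    (hlow : ∀ i j, b i < b j → M i j = 0)
    (hdiag : ∀ p : Fin m, _root_.IsPrimitive (diagBlock M b p) ∨
      (∀ i j, b i = p → b j = p → i = j ∧ M i j = 0))
    (hlam : 0 < lam) {v : Fin n → ℝ} (hv0 : 0 ≤ v) (hv : M *ᵥ v = lam • v) (hne : v ≠ 0) :
    ∃ w c, IsPrincipalEV M b lam w ∧ 0 < c ∧ c • w ≤ v ∧ ∃ i, v i ≠ 0 ∧ v i = c * w i := by
  obtain ⟨i₀, hi₀, hmin⟩ := (Finset.univ.filter fun i => v i ≠ 0).exists_min_image b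
    (by simpa [Finset.filter_nonempty_iff] using Function.ne_iff.1 hne)
  replace hi₀ : v i₀ ≠ 0 := (Finset.mem_filter.1 hi₀).2
  set p := b i₀
  have hx : IsBlockEigenvector M b p lam ({i | b i = p}.indicator v) :=
    isBlockEigenvector_indicator hlow hv0 hv (fun j hj => hmin j (by simpa using hj))
      ⟨i₀, rfl, hi₀⟩
  have hp : _root_.IsPrimitive (diagBlock M b p) :=
    (hdiag p).resolve_right fun h => hlam.ne' (hx.eq_zero_of_null h)
  obtain ⟨w, hw, hxw, hwv, hwsupp⟩ := exists_mulVec_eq_between hM hlam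
    (hx.mulVec_eq ▸ mulVec_mono_left (blockMask_le hM b p) hx.nonneg)
    (Set.indicator_le_self' fun i _ => hv0 i) hv
  have hw0 : 0 ≤ w := hx.nonneg.trans hxw
  have hwp : ∀ i, b i = p → 0 < w i := fun i hi => ((hx.pos hM hp).2 i hi).trans_le (hxw i)
  have hwi₀ : w i₀ = v i₀ :=
    (hwv i₀).antisymm ((Set.indicator_of_mem (show i₀ ∈ {i | b i = p} from rfl) v).symm.trans_le
      (hxw i₀))
  set c := ∑ i ∈ Finset.univ.filter (fun i => b i = p), w i
  have hc : 0 < c := Finset.sum_pos (fun j hj => hwp j (Finset.mem_filter.1 hj).2)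
    ⟨i₀, by simp [p]⟩
  refine ⟨c⁻¹ • w, c, isPrincipalEV_inv_smul
    (isPrincipalBlock_of_eigenvector hM hdiag hp hlam hx hw0 hw hwp) (blockEig_iff.2 ⟨_, hx⟩)
    hw0 hw hwp (fun i hi => (em (b i = p)).imp_right fun hip => ?_), hc,
    by rwa [smul_inv_smul₀ hc.ne'], i₀, hi₀, by simp [mul_inv_cancel_left₀ hc.ne', hwi₀]⟩
  obtain ⟨t, ht⟩ := hwsupp i hi
  exact succ_of_pow_mulVec_apply_ne_zero hM hx.support_subset ht hip

lemma exists_isPrincipalEV_sum_eq (hM : ∀ i j, 0 ≤ M i j)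
    (hlow : ∀ i j, b i < b j → M i j = 0)
    (hdiag : ∀ p : Fin m, _root_.IsPrimitive (diagBlock M b p) ∨
      (∀ i j, b i = p → b j = p → i = j ∧ M i j = 0))
    (hlam : 0 < lam) {v : Fin n → ℝ} (hv0 : 0 ≤ v) (hv : M *ᵥ v = lam • v) :
    ∃ (k : ℕ) (w : Fin k → Fin n → ℝ) (c : Fin k → ℝ),
      (∀ s, IsPrincipalEV M b lam (w s)) ∧ (∀ s, 0 ≤ c s) ∧ v = ∑ s, c s • w s := by
  induction h : (Finset.univ.filter fun i => v i ≠ 0).card using Nat.strong_induction_on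
    generalizing v with
  | _ N ih =>
    by_cases hne : v = 0
    · exact ⟨0, ![], ![], fun s => s.elim0, fun s => s.elim0, by simp [hne]⟩
    obtain ⟨w, c, hw, hc, hcw, i, hvi, hi⟩ :=
      exists_isPrincipalEV_smul_le hM hlow hdiag hlam hv0 hv hne
    have hsub : Finset.univ.filter (fun j => (v - c • w) j ≠ 0) ⊂
        Finset.univ.filter (fun j => v j ≠ 0) := by
      refine (Finset.ssubset_iff_of_subset fun j => ?_).2 ⟨i, by simpa using hvi, by simp [hi]⟩
      have hcwj : 0 ≤ c * w j := mul_nonneg hc.le (hw.nonneg j)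
      have := hcw j
      simp only [Finset.mem_filter, Finset.mem_univ, true_and, Pi.sub_apply, Pi.smul_apply,
        smul_eq_mul] at this ⊢
      intro hj hvj
      exact hj (by linarith)
    obtain ⟨k, ws, cs, hws, hcs, hrepr⟩ := ih _ (h ▸ Finset.card_lt_card hsub) (sub_nonneg.2 hcw)
      (by rw [mulVec_sub, mulVec_smul, hv, hw.mulVec_eq, smul_sub, smul_comm]) rfl
    refine ⟨k + 1, Fin.cons w ws, Fin.cons c cs, Fin.cases hw hws, Fin.cases hc.le hcs, ?_⟩
    rw [Fin.sum_univ_succ]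
    simp only [Fin.cons_zero, Fin.cons_succ, ← hrepr]
    abel

end Decomposition

theorem statement11_general {n m : ℕ} (M : Matrix (Fin n) (Fin n) ℝ)
    (hZ : ∀ i j, ∃ z : ℕ, M i j = (z : ℝ))
    (b : Fin n → Fin m)
    (hlow : ∀ i j, b i < b j → M i j = 0)
    (hdiag : ∀ p : Fin m, _root_.IsPrimitive (diagBlock M b p) ∨
      (∀ i j, b i = p → b j = p → i = j ∧ M i j = 0))
    (lam : ℝ) (hlam : 1 ≤ lam)
    (v : Fin n → ℝ) (hv : ∀ i, 0 ≤ v i) :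
    M.mulVec v = lam • v ↔
      ∃ (k : ℕ) (w : Fin k → (Fin n → ℝ)) (c : Fin k → ℝ),
        (∀ s, IsPrincipalEV M b lam (w s)) ∧ (∀ s, 0 ≤ c s) ∧ v = ∑ s, c s • w s := by
  have hM : ∀ i j, 0 ≤ M i j := fun i j => by
    obtain ⟨z, hz⟩ := hZ i j
    exact hz ▸ z.cast_nonneg
  refine ⟨exists_isPrincipalEV_sum_eq hM hlow hdiag (by linarith) hv, ?_⟩
  rintro ⟨k, w, c, hw, -, rfl⟩
  simp only [mulVec_sum, mulVec_smul, (hw _).mulVec_eq, Finset.smul_sum, smul_comm lam]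

/-- A non-negative vector `v ≠ 0` is an eigenvector of `M` with eigenvalue `lam ≥ 1`
iff it lies in the non-negative cone spanned by the principal eigenvectors of `M`
with eigenvalue `lam`. -/
theorem statement11 {n m : ℕ} (M : Matrix (Fin n) (Fin n) ℝ)
    (hZ : ∀ i j, ∃ z : ℕ, M i j = (z : ℝ))
    (b : Fin n → Fin m)
    (hlow : ∀ i j, b i < b j → M i j = 0)
    (hdiag : ∀ p : Fin m, _root_.IsPrimitive (diagBlock M b p) ∨
      (∀ i j, b i = p → b j = p → i = j ∧ M i j = 0))
    (hcol : ∀ j, ∃ i, 0 < M i j)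
    (lam : ℝ) (hlam : 1 ≤ lam)
    (v : Fin n → ℝ) (hv : ∀ i, 0 ≤ v i) (hvne : v ≠ 0) :
    M.mulVec v = lam • v ↔
      ∃ (k : ℕ) (w : Fin k → (Fin n → ℝ)) (c : Fin k → ℝ),
        (∀ s, IsPrincipalEV M b lam (w s)) ∧ (∀ s, 0 ≤ c s) ∧ v = ∑ s, c s • w s :=
  statement11_general M hZ b hlow hdiag lam hlam v hv
end
end
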